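/- arXiv:2501.11675 — 2 statements merged into one kernel-verified Lean document; each statement's English description precedes it below -/
import Mathlib

section
/- The tournaments H₅ and H₇ force quasirandomness in regular tournaments. -/
open MeasureTheory Filter Topology

/-- A tournament: a finite directed graph on vertex set `Fin n` with no loops and
exactly one arc between each pair of distinct vertices. -/
structure Tournament where
  n : ℕ
  arc : Fin n → Fin n → Bool
  irrefl : ∀ i, arc i i = false
  total : ∀ i j, i ≠ j → arc i j = !(arc j i)

/-- The tournament obtained by reversing all arcs. -/
def Tournament.reverse (T : Tournament) : Tournament where
  n := T.n
  arc := fun i j => T.arc j i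
  irrefl := T.irrefl
  total := fun i j h => T.total j i (Ne.symm h)

/-- The number of homomorphisms (arc-preserving maps) from `H` to `T`. -/
noncomputable def homCount (H T : Tournament) : ℕ :=
  Nat.card {f : Fin H.n → Fin T.n // ∀ i j, H.arc i j → T.arc (f i) (f j)}

/-- The homomorphism density `t(H,T) = hom(H,T) / v(T)^(v(H))`. -/
noncomputable def homDensity (H T : Tournament) : ℝ :=
  (homCount H T : ℝ) / (T.n : ℝ) ^ H.n

/-- The out-degree of a vertex in a tournament. -/
noncomputable def outDeg (T : Tournament) (v : Fin T.n) : ℕ :=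
  Nat.card {j : Fin T.n // T.arc v j}

/-- The tournament on 2 vertices with arc 1→2. -/
def TT2 : Tournament := ⟨2, fun i j => decide (i < j), by decide, by decide⟩

/-- The transitive tournament on 3 vertices. -/
def TT3 : Tournament := ⟨3, fun i j => decide (i < j), by decide, by decide⟩

/-- The transitive tournament on 4 vertices. -/
def TT4 : Tournament := ⟨4, fun i j => decide (i < j), by decide, by decide⟩

/-- The cyclic tournament on 3 vertices. -/
def C3 : Tournament :=
  ⟨3, fun i j => decide ((i.val, j.val) ∈ [(0,1),(1,2),(2,0)]), by decide, by decide⟩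

/-- The unique strongly connected tournament on 4 vertices. -/
def C4 : Tournament :=
  ⟨4, fun i j => decide ((i.val, j.val) ∈ [(0,1),(1,2),(2,3),(3,0),(0,2),(1,3)]),
    by decide, by decide⟩

/-- A cyclic triangle together with a sink vertex. -/
def H5 : Tournament :=
  ⟨4, fun i j => decide ((i.val, j.val) ∈ [(0,1),(1,2),(2,0),(0,3),(1,3),(2,3)]),
    by decide, by decide⟩

/-- A cyclic triangle together with a source vertex. -/
def H7 : Tournament :=
  ⟨4, fun i j => decide ((i.val, j.val) ∈ [(0,1),(1,2),(2,0),(3,0),(3,1),(3,2)]),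
    by decide, by decide⟩

/-- The 5-vertex tournament H₉: vertex 0 is a sink, vertex 1 beats only vertex 0,
and vertices 2,3,4 form a cyclic triangle. -/
def H9 : Tournament :=
  ⟨5, fun i j => decide ((i.val, j.val) ∈
      [(1,0),(2,0),(3,0),(4,0),(2,1),(3,1),(4,1),(2,3),(3,4),(4,2)]),
    by decide, by decide⟩

/-- The 5-vertex tournament H₁₆, obtained from H₉ by reversing all arcs. -/
def H16 : Tournament := H9.reverse

/-- The rotational (regular) tournament on 5 vertices: arcs i→i+1 and i→i+2 (mod 5). -/
def H19 : Tournament :=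
  ⟨5, fun i j => decide (j.val = (i.val + 1) % 5 ∨ j.val = (i.val + 2) % 5),
    by decide, by decide⟩

/-- A tournamenton: a measurable function `W : [0,1]² → [0,1]` with
`W x y + W y x = 1` on `[0,1]²`. -/
structure Tournamenton where
  W : ℝ → ℝ → ℝ
  measurable : Measurable (Function.uncurry W)
  nonneg : ∀ x ∈ Set.Icc (0:ℝ) 1, ∀ y ∈ Set.Icc (0:ℝ) 1, 0 ≤ W x y
  le_one : ∀ x ∈ Set.Icc (0:ℝ) 1, ∀ y ∈ Set.Icc (0:ℝ) 1, W x y ≤ 1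
  skew : ∀ x ∈ Set.Icc (0:ℝ) 1, ∀ y ∈ Set.Icc (0:ℝ) 1, W x y + W y x = 1

/-- The homomorphism density of a tournament `H` in a tournamenton `W`. -/
noncomputable def tonDensity (H : Tournament) (W : Tournamenton) : ℝ :=
  ∫ x in Set.univ.pi (fun _ : Fin H.n => Set.Icc (0:ℝ) 1),
    ∏ i : Fin H.n, ∏ j : Fin H.n, if H.arc i j then W.W (x i) (x j) else 1

/-- The out-degree `d⁺_W(x) = ∫₀¹ W(x,y) dy` of a point in a tournamenton. -/
noncomputable def outDegW (W : Tournamenton) (x : ℝ) : ℝ :=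
  ∫ y in Set.Icc (0:ℝ) 1, W.W x y

/-- A tournamenton is regular if almost every point has out-degree 1/2. -/
def Tournamenton.Regular (W : Tournamenton) : Prop :=
  ∀ᵐ x ∂(volume.restrict (Set.Icc (0:ℝ) 1)), outDegW W x = 1/2

/-- `W(x,y) = 1/2` for almost all `(x,y) ∈ [0,1]²`. -/
def Tournamenton.AEHalf (W : Tournamenton) : Prop :=
  ∀ᵐ p : ℝ × ℝ ∂(volume.restrict ((Set.Icc (0:ℝ) 1) ×ˢ (Set.Icc (0:ℝ) 1))),
    W.W p.1 p.2 = 1/2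

/-- A sequence of tournaments is quasirandom if the density of every tournament `H`
on `k` vertices tends to `(1/2)^(k(k-1)/2)`. -/
def Quasirandom (T : ℕ → Tournament) : Prop :=
  ∀ H : Tournament, Tendsto (fun n => homDensity H (T n)) atTop
    (𝓝 ((1/2 : ℝ) ^ (H.n * (H.n - 1) / 2)))

/-- A sequence of tournaments is nearly regular if for every `ε > 0`, eventually all
but at most `ε·v(Tₙ)` vertices have out-degree between `(1/2-ε)v(Tₙ)` and `(1/2+ε)v(Tₙ)`. -/
def NearlyRegular (T : ℕ → Tournament) : Prop :=
  ∀ ε : ℝ, 0 < ε → ∃ n₀ : ℕ, ∀ n, n₀ ≤ n →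
    (Nat.card {v : Fin (T n).n //
        ¬((1/2 - ε) * ((T n).n : ℝ) ≤ (outDeg (T n) v : ℝ) ∧
          (outDeg (T n) v : ℝ) ≤ (1/2 + ε) * ((T n).n : ℝ))} : ℝ) ≤ ε * ((T n).n : ℝ)

/-- A formal linear combination of tournaments, as a list of (coefficient, tournament) pairs. -/
abbrev LinComb := List (ℝ × Tournament)

/-- The density of a formal linear combination in a tournament. -/
noncomputable def lcDensT (c : LinComb) (T : Tournament) : ℝ :=
  (c.map (fun p => p.1 * homDensity p.2 T)).sum

/-- The density of a formal linear combination in a tournamenton. -/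
noncomputable def lcDensW (c : LinComb) (W : Tournamenton) : ℝ :=
  (c.map (fun p => p.1 * tonDensity p.2 W)).sum

/-- `t(c, 1/2) = Σᵢ αᵢ (1/2)^(v(Hᵢ)(v(Hᵢ)-1)/2)`. -/
noncomputable def lcHalf (c : LinComb) : ℝ :=
  (c.map (fun p => p.1 * (1/2 : ℝ) ^ (p.2.n * (p.2.n - 1) / 2))).sum

/-- A set of formal linear combinations forces quasirandomness. -/
def ForcesQR (S : Set LinComb) : Prop :=
  ∀ T : ℕ → Tournament, Tendsto (fun n => (T n).n) atTop atTop →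
    (∀ c ∈ S, Tendsto (fun n => lcDensT c (T n)) atTop (𝓝 (lcHalf c))) →
    Quasirandom T

/-- A set of formal linear combinations forces quasirandomness in regular tournaments. -/
def ForcesQRRegularSet (S : Set LinComb) : Prop :=
  ∀ T : ℕ → Tournament, NearlyRegular T →
    (∀ c ∈ S, Tendsto (fun n => lcDensT c (T n)) atTop (𝓝 (lcHalf c))) →
    Quasirandom T

/-- A single tournament forces quasirandomness in regular tournaments. -/
def ForcesQRRegular (H : Tournament) : Prop :=
  ∀ T : ℕ → Tournament, NearlyRegular T →
    Tendsto (fun n => homDensity H (T n)) atTop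
      (𝓝 ((1/2 : ℝ) ^ (H.n * (H.n - 1) / 2))) →
    Quasirandom T

namespace QR
open Finset

noncomputable def aR (T : Tournament) (i j : Fin T.n) : ℝ := if T.arc i j then 1 else 0
noncomputable def gR (T : Tournament) (i j : Fin T.n) : ℝ := (aR T i j - aR T j i) / 2
noncomputable def g2 (T : Tournament) (i j : Fin T.n) : ℝ := ∑ z, gR T i z * gR T z j
noncomputable def trg4 (T : Tournament) : ℝ := ∑ i, ∑ j, (g2 T i j) ^ 2
noncomputable def beta (T : Tournament) : ℝ := Real.sqrt (Real.sqrt (trg4 T))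
noncomputable def doutR (T : Tournament) (v : Fin T.n) : ℝ := ∑ w, aR T v w
noncomputable def minR (T : Tournament) (w : Fin T.n) : ℝ := ∑ v, aR T v w
noncomputable def qR (T : Tournament) (v w : Fin T.n) : ℝ := ∑ z, aR T v z * aR T z w
noncomputable def DT (T : Tournament) : ℝ :=
  ∑ w, ∑ v, aR T v w * (qR T v w - (minR T w - 1)/2)^2

lemma aR_nonneg (T : Tournament) (i j : Fin T.n) : 0 ≤ aR T i j := by
  unfold aR; split <;> norm_num

lemma aR_le_one (T : Tournament) (i j : Fin T.n) : aR T i j ≤ 1 := by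
  unfold aR; split <;> norm_num

lemma aR_self (T : Tournament) (i : Fin T.n) : aR T i i = 0 := by
  unfold aR; rw [T.irrefl]; simp

lemma aR_add (T : Tournament) (i j : Fin T.n) :
    aR T i j + aR T j i = if i = j then 0 else 1 := by
  rcases eq_or_ne i j with h | h
  · subst h; simp [aR_self]
  · have := T.total i j h
    unfold aR
    rw [this]
    rcases Bool.eq_false_or_eq_true (T.arc j i) with hb | hb <;> rw [hb] <;> simp [h]

lemma aR_mul_rev (T : Tournament) (i j : Fin T.n) : aR T i j * aR T j i = 0 := by
  rcases eq_or_ne i j with h | h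
  · subst h; simp [aR_self]
  · unfold aR; rw [T.total i j h]; cases T.arc j i <;> simp

lemma aR_sq (T : Tournament) (i j : Fin T.n) : aR T i j * aR T i j = aR T i j := by
  unfold aR; split <;> norm_num

lemma gR_anti (T : Tournament) (i j : Fin T.n) : gR T j i = - gR T i j := by
  unfold gR; ring

lemma gR_self (T : Tournament) (i : Fin T.n) : gR T i i = 0 := by
  unfold gR; simp

lemma aR_eq_gR (T : Tournament) (i j : Fin T.n) :
    aR T i j = 1/2 + gR T i j - (if i = j then (1:ℝ) else 0)/2 := by
  have := aR_add T i j
  unfold gR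
  rcases eq_or_ne i j with h | h
  · subst h; rw [if_pos rfl] at *; simp [aR_self]
  · rw [if_neg h] at *; linarith

lemma abs_gR_le (T : Tournament) (i j : Fin T.n) : |gR T i j| ≤ 1/2 := by
  have h0 := aR_nonneg T i j
  have h1 := aR_le_one T i j
  have h0' := aR_nonneg T j i
  have h1' := aR_le_one T j i
  unfold gR
  rw [abs_le]; constructor <;> nlinarith

/-- The pairing lemma: `∑ v w, β v β w a(v,w) = ((∑β)² − ∑β²)/2`. -/
lemma pairing (T : Tournament) (β : Fin T.n → ℝ) :
    ∑ v, ∑ w, β v * β w * aR T v w = ((∑ v, β v)^2 - ∑ v, (β v)^2)/2 := by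
  have key : ∀ v w : Fin T.n, β v * β w * aR T v w + β w * β v * aR T w v
      = β v * β w - (if v = w then β v * β w else 0) := by
    intro v w
    rcases eq_or_ne v w with h' | h'
    · subst h'; simp [aR_self]
    · rw [if_neg h']
      have h := aR_add T v w
      rw [if_neg h'] at h
      linear_combination (β v * β w) * h
  have h2 : (∑ v, ∑ w, β v * β w * aR T v w) + (∑ v, ∑ w, β v * β w * aR T v w)
      = ∑ v, ∑ w, (β v * β w - (if v = w then β v * β w else 0)) := by
    conv_lhs => rw [show (∑ v, ∑ w, β v * β w * aR T v w) + (∑ v, ∑ w, β v * β w * aR T v w)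
      = (∑ v, ∑ w, β v * β w * aR T v w) + (∑ w, ∑ v, β v * β w * aR T v w) from by
        rw [Finset.sum_comm (f := fun v w => β v * β w * aR T v w)]]
    rw [← Finset.sum_add_distrib]
    apply Finset.sum_congr rfl; intro v _
    rw [← Finset.sum_add_distrib]
    apply Finset.sum_congr rfl; intro w _
    exact key v w
  have h3 : ∑ v, ∑ w, (β v * β w - (if v = w then β v * β w else 0))
      = (∑ v, β v)^2 - ∑ v, (β v)^2 := by
    have hv : ∀ v : Fin T.n, ∑ w, (β v * β w - (if v = w then β v * β w else 0))
        = β v * (∑ w, β w) - (β v)^2 := by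
      intro v
      rw [Finset.sum_sub_distrib, ← Finset.mul_sum,
        Finset.sum_ite_eq univ v (fun w => β v * β w), if_pos (Finset.mem_univ v), sq]
    rw [Finset.sum_congr rfl fun v _ => hv v, Finset.sum_sub_distrib, ← Finset.sum_mul, sq]
  linarith [h2, h3]

lemma outDeg_cast (T : Tournament) (v : Fin T.n) : (outDeg T v : ℝ) = doutR T v := by
  unfold outDeg doutR
  rw [Nat.card_eq_fintype_card, Fintype.card_subtype]
  rw [Finset.card_filter]
  push_cast
  apply Finset.sum_congr rfl
  intro w _
  unfold aR
  split <;> simp_all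

lemma sum_doutR (T : Tournament) : ∑ v, doutR T v = ((T.n:ℝ)^2 - T.n)/2 := by
  have := pairing T (fun _ => (1:ℝ))
  simp only [one_mul] at this
  unfold doutR
  rw [this]
  simp [Finset.card_univ]

lemma homCount_eq (H T : Tournament) :
    (homCount H T : ℝ) = ∑ f : Fin H.n → Fin T.n,
      ∏ p : Fin H.n × Fin H.n, (if H.arc p.1 p.2 then aR T (f p.1) (f p.2) else 1) := by
  unfold homCount
  rw [Nat.card_eq_fintype_card, Fintype.card_subtype, Finset.card_filter]
  push_cast
  apply Finset.sum_congr rfl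
  intro f _
  by_cases hf : ∀ i j, H.arc i j → T.arc (f i) (f j)
  · rw [if_pos hf]
    symm
    apply Finset.prod_eq_one
    intro p _
    by_cases hp : H.arc p.1 p.2
    · rw [if_pos hp]; unfold aR; rw [if_pos (hf _ _ hp)]
    · rw [if_neg hp]
  · rw [if_neg hf]
    push_neg at hf
    obtain ⟨i, j, harc, hnot⟩ := hf
    symm
    apply Finset.prod_eq_zero (Finset.mem_univ (i, j))
    rw [if_pos harc]
    unfold aR
    rw [if_neg hnot]

end QR
namespace QR
open Finset

lemma trg4_nonneg (T : Tournament) : 0 ≤ trg4 T := by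
  apply Finset.sum_nonneg; intro i _; apply Finset.sum_nonneg; intro j _; positivity

lemma beta_nonneg (T : Tournament) : 0 ≤ beta T := Real.sqrt_nonneg _

/-- Spectral bound: a bilinear form of `gR` against `[0,1]`-valued vectors is at most `n·β`. -/
lemma bilin_bound (T : Tournament) (u v : Fin T.n → ℝ)
    (hu0 : ∀ s, 0 ≤ u s) (hu1 : ∀ s, u s ≤ 1) (hv0 : ∀ s, 0 ≤ v s) (hv1 : ∀ s, v s ≤ 1) :
    |∑ s, ∑ t, u s * (gR T s t * v t)| ≤ (T.n : ℝ) * beta T := by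
  set w : Fin T.n → ℝ := fun s => ∑ t, gR T s t * v t with hw
  set y : Fin T.n → ℝ := fun t => ∑ z, g2 T t z * v z with hy
  have hsum : ∑ s, ∑ t, u s * (gR T s t * v t) = ∑ s, u s * w s := by
    apply Finset.sum_congr rfl; intro s _; rw [hw, Finset.mul_sum]
  have hvsq : ∑ t, (v t)^2 ≤ (T.n : ℝ) := by
    calc ∑ t, (v t)^2 ≤ ∑ _t : Fin T.n, (1:ℝ) := by
          apply Finset.sum_le_sum; intro t _
          have := hv0 t; have := hv1 t; nlinarith
      _ = (T.n : ℝ) := by simp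
  have husq : ∑ s, (u s)^2 ≤ (T.n : ℝ) := by
    calc ∑ s, (u s)^2 ≤ ∑ _s : Fin T.n, (1:ℝ) := by
          apply Finset.sum_le_sum; intro s _
          have := hu0 s; have := hu1 s; nlinarith
      _ = (T.n : ℝ) := by simp
  have hstz : ∀ t z : Fin T.n, ∑ s, gR T s t * v t * (gR T s z * v z)
      = -(g2 T t z * (v t * v z)) := by
    intro t z
    have h1 : ∀ s : Fin T.n, gR T s t * v t * (gR T s z * v z)
        = -(gR T t s * gR T s z * (v t * v z)) := by
      intro s; rw [gR_anti T t s]; ring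
    rw [Finset.sum_congr rfl fun s _ => h1 s]
    unfold g2
    rw [Finset.sum_neg_distrib, ← Finset.sum_mul]
  have hW : ∑ s, (w s)^2 = - ∑ t, v t * y t := by
    have expand : ∀ s : Fin T.n, (w s)^2 = ∑ t, ∑ z, (gR T s t * v t) * (gR T s z * v z) := by
      intro s; rw [hw, sq, Finset.sum_mul_sum]
    rw [Finset.sum_congr rfl fun s _ => expand s]
    rw [Finset.sum_comm]
    have swap2 : ∀ t : Fin T.n, ∑ s, ∑ z, (gR T s t * v t) * (gR T s z * v z)
        = ∑ z : Fin T.n, ∑ s : Fin T.n, (gR T s t * v t) * (gR T s z * v z) :=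
      fun t => Finset.sum_comm
    rw [Finset.sum_congr rfl fun t _ => swap2 t]
    have inner : ∀ t : Fin T.n, ∑ z : Fin T.n, ∑ s, (gR T s t * v t) * (gR T s z * v z)
        = -(v t * y t) := by
      intro t
      rw [Finset.sum_congr rfl fun z _ => hstz t z, hy]
      rw [Finset.mul_sum, ← Finset.sum_neg_distrib]
      apply Finset.sum_congr rfl; intro z _; ring
    rw [Finset.sum_congr rfl fun t _ => inner t, Finset.sum_neg_distrib]
  have hysq : ∑ t, (y t)^2 ≤ trg4 T * (T.n:ℝ) := by
    have hcs : ∀ t, (y t)^2 ≤ (∑ z, (g2 T t z)^2) * ∑ z, (v z)^2 := by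
      intro t; rw [hy]; exact Finset.sum_mul_sq_le_sq_mul_sq univ _ _
    calc ∑ t, (y t)^2 ≤ ∑ t, (∑ z, (g2 T t z)^2) * ∑ z, (v z)^2 :=
          Finset.sum_le_sum fun t _ => hcs t
      _ ≤ ∑ t, (∑ z, (g2 T t z)^2) * (T.n:ℝ) := by
          apply Finset.sum_le_sum; intro t _
          apply mul_le_mul_of_nonneg_left hvsq
          apply Finset.sum_nonneg; intro z _; positivity
      _ = trg4 T * (T.n:ℝ) := by rw [← Finset.sum_mul]; rfl
  have hWbound : ∑ s, (w s)^2 ≤ (T.n:ℝ) * Real.sqrt (trg4 T) := by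
    have h1 : (∑ t, v t * y t)^2 ≤ (∑ t, (v t)^2) * ∑ t, (y t)^2 :=
      Finset.sum_mul_sq_le_sq_mul_sq univ _ _
    have h2 : (∑ t, (v t)^2) * ∑ t, (y t)^2 ≤ (T.n:ℝ) * (trg4 T * (T.n:ℝ)) := by
      apply mul_le_mul hvsq hysq (Finset.sum_nonneg fun t _ => by positivity) (by positivity)
    have h3 : (∑ s, (w s)^2)^2 ≤ (T.n:ℝ)^2 * trg4 T := by
      rw [hW]
      calc (- ∑ t, v t * y t)^2 = (∑ t, v t * y t)^2 := by ring
        _ ≤ (T.n:ℝ) * (trg4 T * (T.n:ℝ)) := le_trans h1 h2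
        _ = (T.n:ℝ)^2 * trg4 T := by ring
    have h4 : 0 ≤ ∑ s, (w s)^2 := Finset.sum_nonneg fun s _ => by positivity
    have h5 : ∑ s, (w s)^2 = Real.sqrt ((∑ s, (w s)^2)^2) := by
      rw [Real.sqrt_sq h4]
    rw [h5]
    calc Real.sqrt ((∑ s, (w s)^2)^2) ≤ Real.sqrt ((T.n:ℝ)^2 * trg4 T) := Real.sqrt_le_sqrt h3
      _ = (T.n:ℝ) * Real.sqrt (trg4 T) := by
          rw [Real.sqrt_mul (by positivity), Real.sqrt_sq (by positivity)]
  have hS : (∑ s, u s * w s)^2 ≤ (T.n:ℝ)^2 * Real.sqrt (trg4 T) := by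
    have h1 : (∑ s, u s * w s)^2 ≤ (∑ s, (u s)^2) * ∑ s, (w s)^2 :=
      Finset.sum_mul_sq_le_sq_mul_sq univ _ _
    have h2 : (∑ s, (u s)^2) * ∑ s, (w s)^2 ≤ (T.n:ℝ) * ((T.n:ℝ) * Real.sqrt (trg4 T)) := by
      apply mul_le_mul husq hWbound (Finset.sum_nonneg fun s _ => by positivity) (by positivity)
    calc (∑ s, u s * w s)^2 ≤ (T.n:ℝ) * ((T.n:ℝ) * Real.sqrt (trg4 T)) := le_trans h1 h2
      _ = (T.n:ℝ)^2 * Real.sqrt (trg4 T) := by ring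
  rw [hsum, ← Real.sqrt_sq_eq_abs]
  calc Real.sqrt ((∑ s, u s * w s)^2) ≤ Real.sqrt ((T.n:ℝ)^2 * Real.sqrt (trg4 T)) :=
        Real.sqrt_le_sqrt hS
    _ = (T.n:ℝ) * beta T := by
        rw [Real.sqrt_mul (by positivity), Real.sqrt_sq (by positivity)]; rfl

/-- Splitting a function space at two coordinates. -/
def splitEquiv (k n : ℕ) (i j : Fin k) (hij : i ≠ j) :
    (Fin k → Fin n) ≃ (Fin n × Fin n × ({x : Fin k // x ≠ i ∧ x ≠ j} → Fin n)) where
  toFun f := (f i, f j, fun p => f p.1)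
  invFun x := fun y =>
    if h1 : y = i then x.1 else if h2 : y = j then x.2.1 else x.2.2 ⟨y, h1, h2⟩
  left_inv f := by
    funext y
    by_cases h1 : y = i
    · subst h1; simp
    · by_cases h2 : y = j
      · subst h2; simp [h1]
      · simp [h1, h2]
  right_inv x := by
    obtain ⟨s, t, h⟩ := x
    refine Prod.ext ?_ (Prod.ext ?_ ?_)
    · simp
    · simp [Ne.symm hij]
    · funext p
      have h1 := p.2.1
      have h2 := p.2.2
      simp [h1, h2]

lemma splitEquiv_symm_apply_i (k n : ℕ) (i j : Fin k) (hij : i ≠ j)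
    (s t : Fin n) (h : {x : Fin k // x ≠ i ∧ x ≠ j} → Fin n) :
    (splitEquiv k n i j hij).symm (s, t, h) i = s := by
  simp [splitEquiv]

lemma splitEquiv_symm_apply_j (k n : ℕ) (i j : Fin k) (hij : i ≠ j)
    (s t : Fin n) (h : {x : Fin k // x ≠ i ∧ x ≠ j} → Fin n) :
    (splitEquiv k n i j hij).symm (s, t, h) j = t := by
  simp [splitEquiv, Ne.symm hij]

lemma splitEquiv_symm_ne_j (k n : ℕ) (i j : Fin k) (hij : i ≠ j)
    (s t t' : Fin n) (h : {x : Fin k // x ≠ i ∧ x ≠ j} → Fin n) (y : Fin k) (hy : y ≠ j) :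
    (splitEquiv k n i j hij).symm (s, t, h) y = (splitEquiv k n i j hij).symm (s, t', h) y := by
  by_cases h1 : y = i <;> simp [splitEquiv, h1, hy]

lemma splitEquiv_symm_ne_i (k n : ℕ) (i j : Fin k) (hij : i ≠ j)
    (s s' t : Fin n) (h : {x : Fin k // x ≠ i ∧ x ≠ j} → Fin n) (y : Fin k) (hy : y ≠ i) :
    (splitEquiv k n i j hij).symm (s, t, h) y = (splitEquiv k n i j hij).symm (s', t, h) y := by
  by_cases h2 : y = j <;> simp [splitEquiv, h2, hy, Ne.symm hij]

lemma card_restSpace (k n : ℕ) (i j : Fin k) (hij : i ≠ j) :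
    Fintype.card ({x : Fin k // x ≠ i ∧ x ≠ j} → Fin n) = n ^ (k - 2) := by
  rw [Fintype.card_fun, Fintype.card_fin]
  congr 1
  rw [Fintype.card_subtype]
  have heq : filter (fun x : Fin k => x ≠ i ∧ x ≠ j) univ = univ \ {i, j} := by
    ext x; simp [Finset.mem_sdiff, not_or]
  rw [heq, Finset.card_sdiff_of_subset (by intro x _; exact Finset.mem_univ x)]
  rw [Finset.card_univ, Fintype.card_fin, Finset.card_insert_of_notMem (by simp [hij]),
    Finset.card_singleton]

end QR
namespace QR
open Finset

noncomputable def Qgen (H T : Tournament) (F : Finset (Fin H.n × Fin H.n)) : ℝ :=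
  ∑ f : Fin H.n → Fin T.n, ∏ p ∈ F, aR T (f p.1) (f p.2)

lemma homCount_Qgen (H T : Tournament) :
    (homCount H T : ℝ) = Qgen H T (univ.filter fun p => (H.arc p.1 p.2 : Prop)) := by
  rw [homCount_eq]; unfold Qgen
  apply Finset.sum_congr rfl; intro f _
  rw [Finset.prod_filter]

lemma card_arcs (H : Tournament) :
    (univ.filter fun p : Fin H.n × Fin H.n => (H.arc p.1 p.2 : Prop)).card
      = H.n * (H.n - 1) / 2 := by
  set c := (univ.filter fun p : Fin H.n × Fin H.n => (H.arc p.1 p.2 : Prop)).card with hc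
  have hcR : (c : ℝ) = ∑ v : Fin H.n, ∑ w : Fin H.n, aR H v w := by
    rw [hc, Finset.card_filter]
    push_cast
    rw [Fintype.sum_prod_type]
    apply Finset.sum_congr rfl
    intro v _
    apply Finset.sum_congr rfl
    intro w _
    unfold aR; split <;> simp_all
  have hpair := pairing H (fun _ => (1:ℝ))
  simp only [one_mul] at hpair
  rw [hpair] at hcR
  simp only [Finset.sum_const, Finset.card_univ, Fintype.card_fin, nsmul_eq_mul, mul_one] at hcR
  have h2 : 2 * c = H.n * H.n - H.n := by
    have hle : H.n ≤ H.n * H.n := by nlinarith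
    have : ((2 * c : ℕ) : ℝ) = ((H.n * H.n - H.n : ℕ) : ℝ) := by
      rw [Nat.cast_sub hle]
      push_cast
      rw [hcR]; ring
    exact_mod_cast this
  have h3 : H.n * (H.n - 1) = H.n * H.n - H.n := by
    cases H.n with
    | zero => rfl
    | succ m => rw [Nat.succ_sub_one]; simp [Nat.mul_succ, Nat.succ_mul]
  rw [h3, ← h2, Nat.mul_div_cancel_left c (by norm_num)]

lemma step_bound (H T : Tournament) (hn : 1 ≤ T.n) (F : Finset (Fin H.n × Fin H.n))
    (hF : ∀ p ∈ F, (H.arc p.1 p.2 : Prop)) (i j : Fin H.n) (hij : (H.arc i j : Prop))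
    (hijF : (i, j) ∉ F) :
    |∑ f : Fin H.n → Fin T.n, (∏ p ∈ F, aR T (f p.1) (f p.2)) * (aR T (f i) (f j) - 1/2)|
      ≤ (T.n:ℝ) ^ (H.n - 2) * ((T.n:ℝ) * beta T + (T.n:ℝ)/2) := by
  have hij' : i ≠ j := by
    rintro rfl; rw [H.irrefl] at hij; simp at hij
  have hne_j : ∀ p ∈ F, (p.1 = i ∨ p.2 = i) → (p.1 ≠ j ∧ p.2 ≠ j) := by
    intro p hp hPi
    constructor
    · intro h1j
      rcases hPi with h | h
      · exact hij' (h.symm.trans h1j)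
      · have harc := hF p hp
        rw [h1j, h] at harc
        have htot := H.total i j hij'
        rw [hij] at htot
        rw [harc] at htot
        simp at htot
    · intro h2j
      rcases hPi with h | h
      · apply hijF
        have hpeq : p = (i, j) := by
          cases p; simp_all
        rwa [hpeq] at hp
      · exact hij' (h.symm.trans h2j)
  set t₀ : Fin T.n := ⟨0, hn⟩ with ht₀
  set e := splitEquiv H.n T.n i j hij' with he
  set Φ : (Fin H.n → Fin T.n) → ℝ :=
    fun f => (∏ p ∈ F, aR T (f p.1) (f p.2)) * (aR T (f i) (f j) - 1/2) with hΦ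
  have hsum1 : ∑ f : Fin H.n → Fin T.n, Φ f
      = ∑ s : Fin T.n, ∑ t : Fin T.n, ∑ h : {x : Fin H.n // x ≠ i ∧ x ≠ j} → Fin T.n,
          Φ (e.symm (s, t, h)) := by
    rw [← Equiv.sum_comp e.symm Φ]
    rw [Fintype.sum_prod_type]
    apply Finset.sum_congr rfl; intro s _
    rw [Fintype.sum_prod_type]
  have hsum2 : ∑ s : Fin T.n, ∑ t : Fin T.n, ∑ h : {x : Fin H.n // x ≠ i ∧ x ≠ j} → Fin T.n,
          Φ (e.symm (s, t, h))
      = ∑ h : {x : Fin H.n // x ≠ i ∧ x ≠ j} → Fin T.n, ∑ s : Fin T.n, ∑ t : Fin T.n,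
          Φ (e.symm (s, t, h)) := by
    rw [Finset.sum_congr rfl fun s _ => Finset.sum_comm
      (f := fun t h => Φ (e.symm (s, t, h)))]
    exact Finset.sum_comm
  -- per-h bound
  have hper : ∀ h : {x : Fin H.n // x ≠ i ∧ x ≠ j} → Fin T.n,
      |∑ s : Fin T.n, ∑ t : Fin T.n, Φ (e.symm (s, t, h))|
        ≤ (T.n:ℝ) * beta T + (T.n:ℝ)/2 := by
    intro h
    set Pi' : Fin H.n × Fin H.n → Prop := fun p => p.1 = i ∨ p.2 = i with hPi'
    set Pj' : Fin H.n × Fin H.n → Prop := fun p => p.1 = j ∨ p.2 = j with hPj'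
    set u : Fin T.n → ℝ := fun s => ∏ p ∈ F.filter Pi',
      aR T (e.symm (s, t₀, h) p.1) (e.symm (s, t₀, h) p.2) with hu
    set v : Fin T.n → ℝ := fun t => ∏ p ∈ (F.filter fun p => ¬ Pi' p).filter Pj',
      aR T (e.symm (t₀, t, h) p.1) (e.symm (t₀, t, h) p.2) with hv
    set c : ℝ := ∏ p ∈ (F.filter fun p => ¬ Pi' p).filter (fun p => ¬ Pj' p),
      aR T (e.symm (t₀, t₀, h) p.1) (e.symm (t₀, t₀, h) p.2) with hcc
    have hprod : ∀ s t : Fin T.n,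
        (∏ p ∈ F, aR T (e.symm (s, t, h) p.1) (e.symm (s, t, h) p.2)) = u s * v t * c := by
      intro s t
      rw [← Finset.prod_filter_mul_prod_filter_not F Pi'
        (fun p => aR T (e.symm (s, t, h) p.1) (e.symm (s, t, h) p.2))]
      rw [← Finset.prod_filter_mul_prod_filter_not (F.filter fun p => ¬ Pi' p) Pj'
        (fun p => aR T (e.symm (s, t, h) p.1) (e.symm (s, t, h) p.2))]
      rw [mul_assoc]
      congr 1
      · rw [hu]
        apply Finset.prod_congr rfl
        intro p hp
        rw [Finset.mem_filter] at hp
        obtain ⟨hpF, hpi⟩ := hp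
        have hnej := hne_j p hpF hpi
        rw [splitEquiv_symm_ne_j H.n T.n i j hij' s t t₀ h p.1 hnej.1,
            splitEquiv_symm_ne_j H.n T.n i j hij' s t t₀ h p.2 hnej.2]
      congr 1
      · rw [hv]
        apply Finset.prod_congr rfl
        intro p hp
        rw [Finset.mem_filter, Finset.mem_filter] at hp
        obtain ⟨⟨hpF, hnpi⟩, hpj⟩ := hp
        have hn1 : p.1 ≠ i := fun hh => hnpi (Or.inl hh)
        have hn2 : p.2 ≠ i := fun hh => hnpi (Or.inr hh)
        rw [splitEquiv_symm_ne_i H.n T.n i j hij' s t₀ t h p.1 hn1,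
            splitEquiv_symm_ne_i H.n T.n i j hij' s t₀ t h p.2 hn2]
      · rw [hcc]
        apply Finset.prod_congr rfl
        intro p hp
        rw [Finset.mem_filter, Finset.mem_filter] at hp
        obtain ⟨⟨hpF, hnpi⟩, hnpj⟩ := hp
        have hn1 : p.1 ≠ i := fun hh => hnpi (Or.inl hh)
        have hn2 : p.2 ≠ i := fun hh => hnpi (Or.inr hh)
        have hm1 : p.1 ≠ j := fun hh => hnpj (Or.inl hh)
        have hm2 : p.2 ≠ j := fun hh => hnpj (Or.inr hh)
        rw [splitEquiv_symm_ne_i H.n T.n i j hij' s t₀ t h p.1 hn1,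
            splitEquiv_symm_ne_i H.n T.n i j hij' s t₀ t h p.2 hn2,
            splitEquiv_symm_ne_j H.n T.n i j hij' t₀ t t₀ h p.1 hm1,
            splitEquiv_symm_ne_j H.n T.n i j hij' t₀ t t₀ h p.2 hm2]
    have hu0 : ∀ s, 0 ≤ u s := fun s => Finset.prod_nonneg fun p _ => aR_nonneg T _ _
    have hu1 : ∀ s, u s ≤ 1 := fun s =>
      Finset.prod_le_one (fun p _ => aR_nonneg T _ _) (fun p _ => aR_le_one T _ _)
    have hv0 : ∀ t, 0 ≤ v t := fun t => Finset.prod_nonneg fun p _ => aR_nonneg T _ _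
    have hv1 : ∀ t, v t ≤ 1 := fun t =>
      Finset.prod_le_one (fun p _ => aR_nonneg T _ _) (fun p _ => aR_le_one T _ _)
    have hc0 : 0 ≤ c := Finset.prod_nonneg fun p _ => aR_nonneg T _ _
    have hc1 : c ≤ 1 :=
      Finset.prod_le_one (fun p _ => aR_nonneg T _ _) (fun p _ => aR_le_one T _ _)
    have hterm : ∀ s t : Fin T.n, Φ (e.symm (s, t, h))
        = c * (u s * (gR T s t * v t)) - (if s = t then c/2 * (u s * v t) else 0) := by
      intro s t
      rw [hΦ]
      simp only
      rw [hprod s t, splitEquiv_symm_apply_i, splitEquiv_symm_apply_j]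
      rw [aR_eq_gR T s t]
      rcases eq_or_ne s t with hst | hst
      · rw [if_pos hst, if_pos hst]; subst hst; rw [gR_self]; ring
      · rw [if_neg hst, if_neg hst]; ring
    have hsum3 : ∑ s : Fin T.n, ∑ t : Fin T.n, Φ (e.symm (s, t, h))
        = c * (∑ s, ∑ t, u s * (gR T s t * v t)) - c/2 * (∑ s, u s * v s) := by
      calc ∑ s : Fin T.n, ∑ t : Fin T.n, Φ (e.symm (s, t, h))
          = ∑ s : Fin T.n, ∑ t : Fin T.n,
              (c * (u s * (gR T s t * v t)) - (if s = t then c/2 * (u s * v t) else 0)) :=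
            Finset.sum_congr rfl fun s _ => Finset.sum_congr rfl fun t _ => hterm s t
        _ = ∑ s : Fin T.n, ((∑ t, c * (u s * (gR T s t * v t))) - c/2 * (u s * v s)) := by
            apply Finset.sum_congr rfl; intro s _
            rw [Finset.sum_sub_distrib]
            congr 1
            rw [Finset.sum_ite_eq univ s (fun t => c/2 * (u s * v t)),
              if_pos (Finset.mem_univ s)]
        _ = c * (∑ s, ∑ t, u s * (gR T s t * v t)) - c/2 * (∑ s, u s * v s) := by
            rw [Finset.sum_sub_distrib]
            congr 1
            · rw [Finset.mul_sum]
              exact Finset.sum_congr rfl fun s _ => by rw [Finset.mul_sum]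
            · rw [Finset.mul_sum]
    rw [hsum3]
    have hA := bilin_bound T u v hu0 hu1 hv0 hv1
    have hB : |∑ s, u s * v s| ≤ (T.n : ℝ) := by
      calc |∑ s, u s * v s| ≤ ∑ s, |u s * v s| := Finset.abs_sum_le_sum_abs _ _
        _ ≤ ∑ _s : Fin T.n, (1:ℝ) := by
            apply Finset.sum_le_sum; intro s _
            rw [abs_mul, abs_of_nonneg (hu0 s), abs_of_nonneg (hv0 s)]
            exact mul_le_one₀ (hu1 s) (hv0 s) (hv1 s)
        _ = (T.n : ℝ) := by simp
    calc |c * (∑ s, ∑ t, u s * (gR T s t * v t)) - c/2 * (∑ s, u s * v s)|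
        ≤ |c * (∑ s, ∑ t, u s * (gR T s t * v t))| + |c/2 * (∑ s, u s * v s)| :=
          abs_sub _ _
      _ ≤ 1 * ((T.n:ℝ) * beta T) + 1/2 * (T.n:ℝ) := by
          apply add_le_add
          · rw [abs_mul]
            apply mul_le_mul (by rw [abs_of_nonneg hc0]; exact hc1) hA (abs_nonneg _) zero_le_one
          · rw [abs_mul]
            apply mul_le_mul (by rw [abs_div, abs_of_nonneg hc0, abs_two]; linarith) hB
              (abs_nonneg _) (by norm_num)
      _ = (T.n:ℝ) * beta T + (T.n:ℝ)/2 := by ring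
  calc |∑ f : Fin H.n → Fin T.n, Φ f|
      = |∑ h : {x : Fin H.n // x ≠ i ∧ x ≠ j} → Fin T.n, ∑ s : Fin T.n, ∑ t : Fin T.n,
          Φ (e.symm (s, t, h))| := by rw [hsum1, hsum2]
    _ ≤ ∑ h : {x : Fin H.n // x ≠ i ∧ x ≠ j} → Fin T.n, |∑ s : Fin T.n, ∑ t : Fin T.n,
          Φ (e.symm (s, t, h))| := Finset.abs_sum_le_sum_abs _ _
    _ ≤ ∑ _h : {x : Fin H.n // x ≠ i ∧ x ≠ j} → Fin T.n, ((T.n:ℝ) * beta T + (T.n:ℝ)/2) :=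
        Finset.sum_le_sum fun h _ => hper h
    _ = (T.n:ℝ) ^ (H.n - 2) * ((T.n:ℝ) * beta T + (T.n:ℝ)/2) := by
        rw [Finset.sum_const, Finset.card_univ, card_restSpace H.n T.n i j hij',
          nsmul_eq_mul]
        push_cast
        ring

end QR
namespace QR
open Finset

lemma Qgen_empty (H T : Tournament) : Qgen H T ∅ = (T.n:ℝ) ^ H.n := by
  unfold Qgen
  simp only [Finset.prod_empty]
  rw [Finset.sum_const, Finset.card_univ, Fintype.card_fun, Fintype.card_fin, Fintype.card_fin,
    nsmul_eq_mul, mul_one]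
  push_cast; rfl

lemma Qgen_bound (H T : Tournament) (hn : 1 ≤ T.n) (F : Finset (Fin H.n × Fin H.n)) :
    (∀ p ∈ F, (H.arc p.1 p.2 : Prop)) →
    |Qgen H T F - (T.n:ℝ)^H.n * (1/2)^F.card|
      ≤ F.card * ((T.n:ℝ) ^ (H.n - 2) * ((T.n:ℝ) * beta T + (T.n:ℝ)/2)) := by
  classical
  induction F using Finset.induction_on with
  | empty =>
    intro _
    rw [Qgen_empty]
    simp
  | @insert e F he ih =>
    intro hF'
    have hF : ∀ p ∈ F, (H.arc p.1 p.2 : Prop) := fun p hp => hF' p (Finset.mem_insert_of_mem hp)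
    have harc_e : (H.arc e.1 e.2 : Prop) := hF' e (Finset.mem_insert_self e F)
    have hS0 : 0 ≤ (T.n:ℝ) ^ (H.n - 2) * ((T.n:ℝ) * beta T + (T.n:ℝ)/2) := by
      have := beta_nonneg T
      positivity
    have hsplit : Qgen H T (insert e F)
        = (1/2) * Qgen H T F
          + ∑ f : Fin H.n → Fin T.n,
              (∏ p ∈ F, aR T (f p.1) (f p.2)) * (aR T (f e.1) (f e.2) - 1/2) := by
      unfold Qgen
      rw [Finset.mul_sum, ← Finset.sum_add_distrib]
      apply Finset.sum_congr rfl; intro f _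
      rw [Finset.prod_insert he]
      ring
    have hstep := step_bound H T hn F hF e.1 e.2 harc_e (by rwa [Prod.mk.eta])
    have hih := ih hF
    rw [Finset.card_insert_of_notMem he]
    have habs : |Qgen H T (insert e F) - (T.n:ℝ)^H.n * (1/2)^(F.card + 1)|
        ≤ (1/2) * |Qgen H T F - (T.n:ℝ)^H.n * (1/2)^F.card|
          + |∑ f : Fin H.n → Fin T.n,
              (∏ p ∈ F, aR T (f p.1) (f p.2)) * (aR T (f e.1) (f e.2) - 1/2)| := by
      have heq : Qgen H T (insert e F) - (T.n:ℝ)^H.n * (1/2)^(F.card + 1)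
          = (1/2) * (Qgen H T F - (T.n:ℝ)^H.n * (1/2)^F.card)
            + ∑ f : Fin H.n → Fin T.n,
              (∏ p ∈ F, aR T (f p.1) (f p.2)) * (aR T (f e.1) (f e.2) - 1/2) := by
        rw [hsplit]; ring
      rw [heq]
      calc |_ + _| ≤ |(1/2) * (Qgen H T F - (T.n:ℝ)^H.n * (1/2)^F.card)| + |_| := abs_add_le _ _
        _ = (1/2) * |Qgen H T F - (T.n:ℝ)^H.n * (1/2)^F.card| + |_| := by
            rw [abs_mul]; norm_num
    calc |Qgen H T (insert e F) - (T.n:ℝ)^H.n * (1/2)^(F.card + 1)|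
        ≤ (1/2) * |Qgen H T F - (T.n:ℝ)^H.n * (1/2)^F.card|
          + |∑ f : Fin H.n → Fin T.n,
              (∏ p ∈ F, aR T (f p.1) (f p.2)) * (aR T (f e.1) (f e.2) - 1/2)| := habs
      _ ≤ (1/2) * (F.card * ((T.n:ℝ) ^ (H.n - 2) * ((T.n:ℝ) * beta T + (T.n:ℝ)/2)))
          + (T.n:ℝ) ^ (H.n - 2) * ((T.n:ℝ) * beta T + (T.n:ℝ)/2) := by
          apply add_le_add _ hstep
          apply mul_le_mul_of_nonneg_left hih (by norm_num)
      _ ≤ ((F.card + 1 : ℕ) : ℝ) * ((T.n:ℝ) ^ (H.n - 2) * ((T.n:ℝ) * beta T + (T.n:ℝ)/2)) := by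
          push_cast
          nlinarith [hS0, mul_nonneg (Nat.cast_nonneg (α := ℝ) F.card) hS0]

lemma density_bound (H T : Tournament) (hn : 1 ≤ T.n) :
    |homDensity H T - (1/2)^(H.n * (H.n - 1) / 2)|
      ≤ (H.n * (H.n - 1) / 2 : ℕ) * (beta T + 1/2) / T.n := by
  classical
  set E := univ.filter fun p : Fin H.n × Fin H.n => (H.arc p.1 p.2 : Prop) with hE
  have hEarc : ∀ p ∈ E, (H.arc p.1 p.2 : Prop) := by
    intro p hp; rw [hE, Finset.mem_filter] at hp; exact hp.2
  have hb := Qgen_bound H T hn E hEarc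
  have hcard : E.card = H.n * (H.n - 1) / 2 := card_arcs H
  have hnp : (0:ℝ) < (T.n:ℝ) := by exact_mod_cast hn
  have hdens : homDensity H T = Qgen H T E / (T.n:ℝ)^H.n := by
    unfold homDensity
    rw [homCount_Qgen]
  rcases Nat.eq_zero_or_pos (H.n * (H.n - 1) / 2) with hm | hm
  · rw [hcard, hm] at hb
    rw [hm]
    simp only [Nat.cast_zero, pow_zero, mul_one, zero_mul, zero_div] at hb ⊢
    have hQ : Qgen H T E = (T.n:ℝ)^H.n := by
      have h1 := abs_nonneg (Qgen H T E - (T.n:ℝ)^H.n)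
      have h0 : |Qgen H T E - (T.n:ℝ)^H.n| = 0 := le_antisymm hb h1
      have h2 := abs_eq_zero.mp h0
      linarith
    rw [hdens, hQ, div_self (by positivity), sub_self, abs_zero]
  · have hk2 : 2 ≤ H.n := by
      rcases (by omega : H.n = 0 ∨ H.n = 1 ∨ 2 ≤ H.n) with h | h | h
      · rw [h] at hm; norm_num at hm
      · rw [h] at hm; norm_num at hm
      · exact h
    have h1 : (T.n:ℝ) ≠ 0 := ne_of_gt hnp
    have h2 : (T.n:ℝ)^(H.n - 2) ≠ 0 := pow_ne_zero _ h1
    have hpow : (T.n:ℝ)^H.n = (T.n:ℝ)^(H.n - 2) * (T.n:ℝ) * (T.n:ℝ) := by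
      rw [← pow_succ, ← pow_succ]
      congr 1
      omega
    rw [hcard] at hb
    rw [hdens]
    have heq1 : Qgen H T E / (T.n:ℝ)^H.n - (1/2)^(H.n * (H.n - 1) / 2)
        = (Qgen H T E - (T.n:ℝ)^H.n * (1/2)^(H.n * (H.n - 1) / 2)) / (T.n:ℝ)^H.n := by
      rw [sub_div]
      congr 1
      rw [mul_comm ((T.n:ℝ)^H.n)]
      exact (mul_div_cancel_right₀ _ (pow_ne_zero _ h1)).symm
    rw [heq1, abs_div, abs_of_pos (pow_pos hnp H.n)]
    calc |Qgen H T E - (T.n:ℝ)^H.n * (1/2)^(H.n * (H.n - 1) / 2)| / (T.n:ℝ)^H.n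
        ≤ ((H.n * (H.n - 1) / 2 : ℕ) * ((T.n:ℝ) ^ (H.n - 2) * ((T.n:ℝ) * beta T + (T.n:ℝ)/2)))
            / (T.n:ℝ)^H.n := by
          gcongr
      _ = (H.n * (H.n - 1) / 2 : ℕ) * (beta T + 1/2) / T.n := by
          rw [hpow]
          field_simp

end QR
namespace QR
open Finset

def fin4Equiv' (β : Type*) : (Fin 4 → β) ≃ β × β × β × β where
  toFun f := (f 3, f 0, f 1, f 2)
  invFun x := ![x.2.1, x.2.2.1, x.2.2.2, x.1]
  left_inv f := by funext y; fin_cases y <;> rfl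
  right_inv x := rfl

lemma sum_fin4' {β : Type*} [Fintype β] (G : β → β → β → β → ℝ) :
    ∑ f : Fin 4 → β, G (f 0) (f 1) (f 2) (f 3) = ∑ w, ∑ x, ∑ y, ∑ z, G x y z w := by
  rw [← Equiv.sum_comp (fin4Equiv' β).symm (fun f => G (f 0) (f 1) (f 2) (f 3))]
  simp only [Fintype.sum_prod_type]
  rfl

lemma homCount_H5 (T : Tournament) :
    (homCount H5 T : ℝ)
      = ∑ w, ∑ x, ∑ y, ∑ z, aR T x y * aR T y z * aR T z x
          * (aR T x w * aR T y w * aR T z w) := by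
  rw [homCount_eq]
  have hstep : (∑ f : Fin H5.n → Fin T.n, ∏ p : Fin H5.n × Fin H5.n,
        (if H5.arc p.1 p.2 then aR T (f p.1) (f p.2) else 1))
      = ∑ f : Fin 4 → Fin T.n, (fun x y z w => aR T x y * aR T y z * aR T z x
          * (aR T x w * aR T y w * aR T z w)) (f 0) (f 1) (f 2) (f 3) := by
    show (∑ f : Fin 4 → Fin T.n, ∏ p : Fin 4 × Fin 4,
        (if H5.arc p.1 p.2 then aR T (f p.1) (f p.2) else 1)) = _
    apply Finset.sum_congr rfl; intro f _
    rw [Fintype.prod_prod_type]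
    rw [Fin.prod_univ_four]
    rw [Fin.prod_univ_four, Fin.prod_univ_four, Fin.prod_univ_four, Fin.prod_univ_four]
    rw [if_neg (by decide : ¬ (H5.arc (0:Fin 4) (0:Fin 4) = true)),
        if_pos (by decide : H5.arc (0:Fin 4) (1:Fin 4) = true),
        if_neg (by decide : ¬ (H5.arc (0:Fin 4) (2:Fin 4) = true)),
        if_pos (by decide : H5.arc (0:Fin 4) (3:Fin 4) = true),
        if_neg (by decide : ¬ (H5.arc (1:Fin 4) (0:Fin 4) = true)),
        if_neg (by decide : ¬ (H5.arc (1:Fin 4) (1:Fin 4) = true)),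
        if_pos (by decide : H5.arc (1:Fin 4) (2:Fin 4) = true),
        if_pos (by decide : H5.arc (1:Fin 4) (3:Fin 4) = true),
        if_pos (by decide : H5.arc (2:Fin 4) (0:Fin 4) = true),
        if_neg (by decide : ¬ (H5.arc (2:Fin 4) (1:Fin 4) = true)),
        if_neg (by decide : ¬ (H5.arc (2:Fin 4) (2:Fin 4) = true)),
        if_pos (by decide : H5.arc (2:Fin 4) (3:Fin 4) = true),
        if_neg (by decide : ¬ (H5.arc (3:Fin 4) (0:Fin 4) = true)),
        if_neg (by decide : ¬ (H5.arc (3:Fin 4) (1:Fin 4) = true)),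
        if_neg (by decide : ¬ (H5.arc (3:Fin 4) (2:Fin 4) = true)),
        if_neg (by decide : ¬ (H5.arc (3:Fin 4) (3:Fin 4) = true))]
    ring
  rw [hstep, sum_fin4' (fun x y z w => aR T x y * aR T y z * aR T z x
      * (aR T x w * aR T y w * aR T z w))]

/-- The exact identity for the count of `H5` rooted at a fixed sink `w`. -/
lemma tri_identity (T : Tournament) (w : Fin T.n) :
    ∑ x, ∑ y, ∑ z, aR T x y * aR T y z * aR T z x
        * (aR T x w * aR T y w * aR T z w)
      = ((minR T w)^3 - minR T w)/8
        - (3/2) * ∑ v, aR T v w * (qR T v w - (minR T w - 1)/2)^2 := by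
  have hsumu : ∑ v, aR T v w = minR T w := rfl
  have hdv : ∀ v : Fin T.n, qR T v w = ∑ z, aR T v z * aR T z w := fun v => rfl
  have husq_sum : ∑ v, (aR T v w)^2 = minR T w := by
    rw [← hsumu]
    exact Finset.sum_congr rfl fun v _ => by rw [sq, aR_sq]
  -- the pointwise decomposition  a z x = 1 - a x z - δ_{xz}
  have hsplit : ∀ x y z : Fin T.n, aR T x y * aR T y z * aR T z x
        * (aR T x w * aR T y w * aR T z w)
      = aR T x w * aR T y w * aR T z w * (aR T x y * aR T y z)
        - aR T x w * aR T y w * aR T z w * (aR T x y * aR T y z * aR T x z)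
        - aR T x w * aR T y w * aR T z w
            * (aR T x y * aR T y z * (if x = z then 1 else 0)) := by
    intro x y z
    have h := aR_add T x z
    rcases eq_or_ne x z with h' | h'
    · rw [if_pos h'] at h ⊢
      subst h'
      rw [aR_self]
      ring
    · rw [if_neg h'] at h ⊢
      linear_combination (aR T x w * aR T y w * aR T z w * (aR T x y * aR T y z)) * h
  -- chain term
  have hdin : ∀ y : Fin T.n, (∑ x, aR T x w * aR T x y)
      = minR T w - aR T y w - qR T y w := by
    intro y
    have key : ∀ x : Fin T.n, aR T x w * aR T x y
        = aR T x w - (if x = y then aR T x w else 0) - aR T y x * aR T x w := by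
      intro x
      have h := aR_add T x y
      rcases eq_or_ne x y with h' | h'
      · rw [if_pos h'] at h ⊢
        subst h'
        rw [aR_self]
        ring
      · rw [if_neg h'] at h ⊢
        linear_combination (aR T x w) * h
    rw [Finset.sum_congr rfl fun x _ => key x, Finset.sum_sub_distrib, Finset.sum_sub_distrib,
      Finset.sum_ite_eq' univ y (fun x => aR T x w), if_pos (Finset.mem_univ y), hsumu]
    have : ∑ x, aR T y x * aR T x w = qR T y w := (hdv y).symm
    rw [this]
  have hchain : ∑ x, ∑ y, ∑ z, aR T x w * aR T y w * aR T z w * (aR T x y * aR T y z)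
      = ∑ y, ((minR T w - 1) * (aR T y w * qR T y w) - aR T y w * (qR T y w)^2) := by
    rw [Finset.sum_comm]
    apply Finset.sum_congr rfl; intro y _
    have h1 : ∀ x : Fin T.n, ∑ z, aR T x w * aR T y w * aR T z w * (aR T x y * aR T y z)
        = (aR T x w * aR T x y) * (aR T y w * qR T y w) := by
      intro x
      have h2 : ∀ z : Fin T.n, aR T x w * aR T y w * aR T z w * (aR T x y * aR T y z)
          = (aR T x w * aR T x y * aR T y w) * (aR T y z * aR T z w) := fun z => by ring
      rw [Finset.sum_congr rfl fun z _ => h2 z, ← Finset.mul_sum, ← hdv y]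
      ring
    rw [Finset.sum_congr rfl fun x _ => h1 x, ← Finset.sum_mul, hdin y]
    have husq := aR_sq T y w
    linear_combination (-(qR T y w)) * husq
  -- transitive term
  have hw2 : ∀ x : Fin T.n, ∑ y, ∑ z, (aR T x y * aR T y w) * (aR T x z * aR T z w) * aR T y z
      = ((qR T x w)^2 - qR T x w)/2 := by
    intro x
    have hp := pairing T (fun v => aR T x v * aR T v w)
    have h2 : ∑ v, (aR T x v * aR T v w)^2 = qR T x w := by
      rw [hdv x]
      apply Finset.sum_congr rfl; intro v _
      linear_combination (aR T v w * aR T v w) * aR_sq T x v + aR T x v * aR_sq T v w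
    rw [hp, h2, ← hdv x]
  have htrans : ∑ x, ∑ y, ∑ z, aR T x w * aR T y w * aR T z w
        * (aR T x y * aR T y z * aR T x z)
      = ∑ x, aR T x w * ((qR T x w)^2 - qR T x w)/2 := by
    apply Finset.sum_congr rfl; intro x _
    have h3 : ∀ y z : Fin T.n, aR T x w * aR T y w * aR T z w
          * (aR T x y * aR T y z * aR T x z)
        = aR T x w * ((aR T x y * aR T y w) * (aR T x z * aR T z w) * aR T y z) :=
      fun y z => by ring
    rw [Finset.sum_congr rfl fun y _ => Finset.sum_congr rfl fun z _ => h3 y z]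
    rw [Finset.sum_congr rfl fun y _ => (Finset.mul_sum _ _ _).symm, ← Finset.mul_sum, hw2 x]
    ring
  -- diagonal term
  have hdiag : ∑ x, ∑ y, ∑ z, aR T x w * aR T y w * aR T z w
        * (aR T x y * aR T y z * (if x = z then 1 else 0)) = 0 := by
    apply Finset.sum_eq_zero; intro x _
    apply Finset.sum_eq_zero; intro y _
    have h4 : ∀ z : Fin T.n, aR T x w * aR T y w * aR T z w
          * (aR T x y * aR T y z * (if x = z then 1 else 0))
        = if x = z then aR T x w * aR T y w * aR T z w * (aR T x y * aR T y z) else 0 := by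
      intro z; split <;> ring
    rw [Finset.sum_congr rfl fun z _ => h4 z,
      Finset.sum_ite_eq univ x (fun z => aR T x w * aR T y w * aR T z w * (aR T x y * aR T y z)),
      if_pos (Finset.mem_univ x)]
    linear_combination (aR T x w * aR T y w * aR T x w) * aR_mul_rev T x y
  -- the u·d pairing
  have hud : ∑ v, aR T v w * qR T v w = ((minR T w)^2 - minR T w)/2 := by
    have hp := pairing T (fun v => aR T v w)
    have h5 : ∀ v : Fin T.n, aR T v w * qR T v w
        = ∑ z, aR T v w * aR T z w * aR T v z := by
      intro v
      rw [hdv v, Finset.mul_sum]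
      exact Finset.sum_congr rfl fun z _ => by ring
    rw [Finset.sum_congr rfl fun v _ => h5 v, hp, hsumu, husq_sum]
  -- assemble
  calc ∑ x, ∑ y, ∑ z, aR T x y * aR T y z * aR T z x * (aR T x w * aR T y w * aR T z w)
      = (∑ x, ∑ y, ∑ z, aR T x w * aR T y w * aR T z w * (aR T x y * aR T y z))
        - (∑ x, ∑ y, ∑ z, aR T x w * aR T y w * aR T z w
            * (aR T x y * aR T y z * aR T x z))
        - (∑ x, ∑ y, ∑ z, aR T x w * aR T y w * aR T z w
            * (aR T x y * aR T y z * (if x = z then 1 else 0))) := by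
        simp only [← Finset.sum_sub_distrib]
        exact Finset.sum_congr rfl fun x _ => Finset.sum_congr rfl fun y _ =>
          Finset.sum_congr rfl fun z _ => hsplit x y z
    _ = (∑ y, ((minR T w - 1) * (aR T y w * qR T y w) - aR T y w * (qR T y w)^2))
        - (∑ x, aR T x w * ((qR T x w)^2 - qR T x w)/2) - 0 := by
        rw [hchain, htrans, hdiag]
    _ = ∑ v, (-(3/2) * (aR T v w * (qR T v w - (minR T w - 1)/2)^2)
          + ((2 - minR T w)/2) * (aR T v w * qR T v w)
          + (3/8) * (minR T w - 1)^2 * aR T v w) := by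
        rw [sub_zero, ← Finset.sum_sub_distrib]
        exact Finset.sum_congr rfl fun v _ => by ring
    _ = -(3/2) * (∑ v, aR T v w * (qR T v w - (minR T w - 1)/2)^2)
        + ((2 - minR T w)/2) * (((minR T w)^2 - minR T w)/2)
        + (3/8) * (minR T w - 1)^2 * minR T w := by
        rw [Finset.sum_add_distrib, Finset.sum_add_distrib, ← Finset.mul_sum, ← Finset.mul_sum,
          ← Finset.mul_sum, hud, hsumu]
    _ = ((minR T w)^3 - minR T w)/8
        - (3/2) * ∑ v, aR T v w * (qR T v w - (minR T w - 1)/2)^2 := by ring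

lemma H5_identity (T : Tournament) :
    (homCount H5 T : ℝ)
      = (∑ w, ((minR T w)^3 - minR T w)/8) - (3/2) * DT T := by
  rw [homCount_H5, Finset.sum_congr rfl fun w (_ : w ∈ univ) => tri_identity T w]
  unfold DT
  rw [Finset.sum_sub_distrib, Finset.mul_sum]

end QR
namespace QR
open Finset

lemma gR_eq (T : Tournament) (i j : Fin T.n) :
    gR T i j = aR T i j - 1/2 + (if i = j then (1:ℝ) else 0)/2 := by
  linear_combination -(aR_eq_gR T i j)

lemma g2_symm (T : Tournament) (v w : Fin T.n) : g2 T w v = g2 T v w := by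
  unfold g2
  apply Finset.sum_congr rfl; intro z _
  rw [gR_anti T z w, gR_anti T v z]
  ring

lemma g2_eq (T : Tournament) (v w : Fin T.n) :
    g2 T v w = qR T v w - doutR T v / 2 - minR T w / 2 + aR T v w
      + (T.n:ℝ)/4 - 1/2 + (if v = w then (1:ℝ) else 0)/4 := by
  unfold g2
  have hterm : ∀ z, gR T v z * gR T z w
      = aR T v z * aR T z w - aR T v z / 2 - aR T z w / 2 + 1/4
        + ((if v = z then (1:ℝ) else 0) * (2 * aR T z w - 1) / 4
        + ((if z = w then (1:ℝ) else 0) * (2 * aR T v z - 1) / 4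
        + (if v = z then (1:ℝ) else 0) * (if z = w then (1:ℝ) else 0) / 4)) := by
    intro z
    rw [gR_eq T v z, gR_eq T z w]
    ring
  rw [Finset.sum_congr rfl fun z _ => hterm z]
  rw [Finset.sum_add_distrib, Finset.sum_add_distrib, Finset.sum_add_distrib,
    Finset.sum_add_distrib, Finset.sum_sub_distrib, Finset.sum_sub_distrib]
  have e1 : ∑ z, aR T v z * aR T z w = qR T v w := rfl
  have e2 : ∑ z, aR T v z / 2 = doutR T v / 2 := by
    rw [← Finset.sum_div]; rfl
  have e3 : ∑ z, aR T z w / 2 = minR T w / 2 := by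
    rw [← Finset.sum_div]; rfl
  have e4 : ∑ _z : Fin T.n, (1:ℝ)/4 = (T.n:ℝ)/4 := by
    rw [Finset.sum_const, Finset.card_univ, Fintype.card_fin, nsmul_eq_mul]; ring
  have e5 : ∑ z, (if v = z then (1:ℝ) else 0) * (2 * aR T z w - 1) / 4
      = (2 * aR T v w - 1)/4 := by
    have : ∀ z, (if v = z then (1:ℝ) else 0) * (2 * aR T z w - 1) / 4
        = if v = z then (2 * aR T z w - 1)/4 else 0 := by
      intro z; split <;> ring
    rw [Finset.sum_congr rfl fun z _ => this z,
      Finset.sum_ite_eq univ v (fun z => (2 * aR T z w - 1)/4), if_pos (Finset.mem_univ v)]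
  have e6 : ∑ z, (if z = w then (1:ℝ) else 0) * (2 * aR T v z - 1) / 4
      = (2 * aR T v w - 1)/4 := by
    have : ∀ z, (if z = w then (1:ℝ) else 0) * (2 * aR T v z - 1) / 4
        = if z = w then (2 * aR T v z - 1)/4 else 0 := by
      intro z; split <;> ring
    rw [Finset.sum_congr rfl fun z _ => this z,
      Finset.sum_ite_eq' univ w (fun z => (2 * aR T v z - 1)/4), if_pos (Finset.mem_univ w)]
  have e7 : ∑ z, (if v = z then (1:ℝ) else 0) * (if z = w then (1:ℝ) else 0) / 4
      = (if v = w then (1:ℝ) else 0)/4 := by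
    have : ∀ z, (if v = z then (1:ℝ) else 0) * (if z = w then (1:ℝ) else 0) / 4
        = if v = z then (if z = w then (1:ℝ) else 0)/4 else 0 := by
      intro z; split <;> ring
    rw [Finset.sum_congr rfl fun z _ => this z,
      Finset.sum_ite_eq univ v (fun z => (if z = w then (1:ℝ) else 0)/4),
      if_pos (Finset.mem_univ v)]
  rw [e1, e2, e3, e4, e5, e6, e7]
  ring

lemma doutR_nonneg (T : Tournament) (v : Fin T.n) : 0 ≤ doutR T v :=
  Finset.sum_nonneg fun w _ => aR_nonneg T v w

lemma doutR_le (T : Tournament) (v : Fin T.n) : doutR T v ≤ (T.n:ℝ) := by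
  calc doutR T v ≤ ∑ _w : Fin T.n, (1:ℝ) := Finset.sum_le_sum fun w _ => aR_le_one T v w
    _ = (T.n:ℝ) := by simp

lemma minR_nonneg (T : Tournament) (w : Fin T.n) : 0 ≤ minR T w :=
  Finset.sum_nonneg fun v _ => aR_nonneg T v w

lemma minR_le (T : Tournament) (w : Fin T.n) : minR T w ≤ (T.n:ℝ) := by
  calc minR T w ≤ ∑ _v : Fin T.n, (1:ℝ) := Finset.sum_le_sum fun v _ => aR_le_one T v w
    _ = (T.n:ℝ) := by simp

lemma minR_eq (T : Tournament) (w : Fin T.n) :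
    minR T w = (T.n:ℝ) - 1 - doutR T w := by
  have key : ∀ v, aR T v w
      = 1 - (if v = w then (1:ℝ) else 0) - aR T w v := by
    intro v
    have h := aR_add T v w
    rcases eq_or_ne v w with h' | h'
    · rw [if_pos h'] at h ⊢; subst h'; rw [aR_self]; ring
    · rw [if_neg h'] at h ⊢; linarith
  unfold minR
  rw [Finset.sum_congr rfl fun v _ => key v, Finset.sum_sub_distrib, Finset.sum_sub_distrib,
    Finset.sum_ite_eq' univ w (fun _ => (1:ℝ)), if_pos (Finset.mem_univ w)]
  have : (∑ _v : Fin T.n, (1:ℝ)) = (T.n:ℝ) := by simp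
  rw [this]
  rfl

/-- The set of vertices violating the near-regularity degree condition at level ε. -/
noncomputable def bad (T : Tournament) (ε : ℝ) : Finset (Fin T.n) :=
  univ.filter (fun v => ¬((1/2 - ε) * (T.n : ℝ) ≤ (outDeg T v : ℝ)
    ∧ (outDeg T v : ℝ) ≤ (1/2 + ε) * (T.n : ℝ)))

lemma bad_card_eq (T : Tournament) (ε : ℝ) :
    (Nat.card {v : Fin T.n // ¬((1/2 - ε) * ((T.n) : ℝ) ≤ (outDeg T v : ℝ)
      ∧ (outDeg T v : ℝ) ≤ (1/2 + ε) * ((T.n) : ℝ))}) = (bad T ε).card := by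
  rw [Nat.card_eq_fintype_card, Fintype.card_subtype]
  congr 1

lemma good_bounds (T : Tournament) (ε : ℝ) (v : Fin T.n) (hv : v ∉ bad T ε) :
    (1/2 - ε) * (T.n : ℝ) ≤ doutR T v ∧ doutR T v ≤ (1/2 + ε) * (T.n : ℝ) := by
  rw [bad, Finset.mem_filter] at hv
  push_neg at hv
  have h := hv (Finset.mem_univ v)
  rwa [outDeg_cast] at h

/-- Step A: near-regularity forces `3 ε n ≥ 1` for nonempty tournaments. -/
lemma three_eps (T : Tournament) (ε : ℝ) (hε : 0 < ε) (hn : 1 ≤ T.n)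
    (hbad : ((bad T ε).card : ℝ) ≤ ε * T.n) : 1 ≤ 3 * ε * T.n := by
  have hn1 : (1:ℝ) ≤ (T.n:ℝ) := by exact_mod_cast hn
  rcases le_or_gt (1/2 : ℝ) ε with hh | hh
  · nlinarith
  · have hsum : ∑ v, doutR T v = ((T.n:ℝ)^2 - T.n)/2 := sum_doutR T
    have hgood : ∀ v ∈ univ \ bad T ε, (1/2 - ε) * (T.n : ℝ) ≤ doutR T v := by
      intro v hv
      rw [Finset.mem_sdiff] at hv
      exact (good_bounds T ε v hv.2).1
    have hcard : ((univ \ bad T ε).card : ℝ) = (T.n:ℝ) - (bad T ε).card := by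
      rw [Finset.card_sdiff_of_subset (Finset.subset_univ _)]
      rw [Nat.cast_sub (le_trans (Finset.card_le_card (Finset.subset_univ _)) (le_of_eq (by simp)))]
      simp
    have h1 : ((univ \ bad T ε).card : ℝ) * ((1/2 - ε) * (T.n : ℝ))
        ≤ ∑ v ∈ univ \ bad T ε, doutR T v := by
      have := Finset.card_nsmul_le_sum (univ \ bad T ε) (doutR T) ((1/2 - ε) * (T.n : ℝ)) hgood
      rwa [nsmul_eq_mul] at this
    have h2 : ∑ v ∈ univ \ bad T ε, doutR T v ≤ ∑ v, doutR T v := by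
      apply Finset.sum_le_sum_of_subset_of_nonneg (Finset.subset_univ _)
      intro v _ _; exact doutR_nonneg T v
    rw [hcard] at h1
    nlinarith [hbad, hsum, hn1, hε, hh]

/-- Step B per tournament: bound on the defect `DT`. -/
lemma DT_bound (T : Tournament) (ε : ℝ) (hε0 : 0 < ε) (hε1 : ε ≤ 1) (hn : 1 ≤ T.n)
    (hbad : ((bad T ε).card : ℝ) ≤ ε * T.n) :
    (3/2) * DT T ≤ (1/64 + ε) * (T.n:ℝ)^4 - (homCount H5 T : ℝ) := by
  have hn1 : (1:ℝ) ≤ (T.n:ℝ) := by exact_mod_cast hn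
  have hId := H5_identity T
  have hsum : ∑ w, ((minR T w)^3 - minR T w)/8 ≤ (1/64 + ε) * (T.n:ℝ)^4 := by
    have hsplit := Finset.sum_filter_add_sum_filter_not univ
      (fun w => w ∈ bad T ε) (fun w => ((minR T w)^3 - minR T w)/8)
    have hbadpart : ∑ w ∈ univ.filter (fun w => w ∈ bad T ε), ((minR T w)^3 - minR T w)/8
        ≤ ((bad T ε).card : ℝ) * ((T.n:ℝ)^3/8) := by
      have hb : ∀ w ∈ univ.filter (fun w => w ∈ bad T ε),
          ((minR T w)^3 - minR T w)/8 ≤ (T.n:ℝ)^3/8 := by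
        intro w _
        have h1 := minR_nonneg T w
        have h2 := minR_le T w
        have h3 : minR T w ^ 3 ≤ (T.n:ℝ)^3 := pow_le_pow_left₀ h1 h2 3
        linarith
      calc ∑ w ∈ univ.filter (fun w => w ∈ bad T ε), ((minR T w)^3 - minR T w)/8
          ≤ ∑ _w ∈ univ.filter (fun w => w ∈ bad T ε), (T.n:ℝ)^3/8 := Finset.sum_le_sum hb
        _ = ((univ.filter (fun w => w ∈ bad T ε)).card : ℝ) * ((T.n:ℝ)^3/8) := by
            rw [Finset.sum_const, nsmul_eq_mul]
        _ ≤ ((bad T ε).card : ℝ) * ((T.n:ℝ)^3/8) := by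
            apply mul_le_mul_of_nonneg_right _ (by positivity)
            have : (univ.filter (fun w => w ∈ bad T ε)) = bad T ε := by
              ext w; simp
            rw [this]
    have hgoodpart : ∑ w ∈ univ.filter (fun w => w ∉ bad T ε), ((minR T w)^3 - minR T w)/8
        ≤ (T.n:ℝ) * ((1/8 + 4*ε) * (T.n:ℝ)^3/8) := by
      have hg : ∀ w ∈ univ.filter (fun w => w ∉ bad T ε),
          ((minR T w)^3 - minR T w)/8 ≤ (1/8 + 4*ε) * (T.n:ℝ)^3/8 := by
        intro w hw
        rw [Finset.mem_filter] at hw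
        have hgb := (good_bounds T ε w hw.2).1
        have hm : minR T w ≤ (1/2 + ε) * (T.n:ℝ) := by
          rw [minR_eq]
          nlinarith
        have h1 := minR_nonneg T w
        have h3 : (minR T w)^3 ≤ ((1/2 + ε) * (T.n:ℝ))^3 := by
          apply pow_le_pow_left₀ h1 hm
        have h4 : ((1/2 + ε) * (T.n:ℝ))^3 ≤ (1/8 + 4*ε) * (T.n:ℝ)^3 := by
          have e2 : ε^2 ≤ ε := by nlinarith
          have e3 : ε^3 ≤ ε := by nlinarith
          have : (1/2 + ε)^3 ≤ 1/8 + 4*ε := by nlinarith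
          calc ((1/2 + ε) * (T.n:ℝ))^3 = (1/2 + ε)^3 * (T.n:ℝ)^3 := by ring
            _ ≤ (1/8 + 4*ε) * (T.n:ℝ)^3 := by
                apply mul_le_mul_of_nonneg_right this (by positivity)
        nlinarith
      calc ∑ w ∈ univ.filter (fun w => w ∉ bad T ε), ((minR T w)^3 - minR T w)/8
          ≤ ∑ _w ∈ univ.filter (fun w => w ∉ bad T ε), (1/8 + 4*ε) * (T.n:ℝ)^3/8 :=
            Finset.sum_le_sum hg
        _ = ((univ.filter (fun w => w ∉ bad T ε)).card : ℝ) * ((1/8 + 4*ε) * (T.n:ℝ)^3/8) := by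
            rw [Finset.sum_const, nsmul_eq_mul]
        _ ≤ (T.n:ℝ) * ((1/8 + 4*ε) * (T.n:ℝ)^3/8) := by
            apply mul_le_mul_of_nonneg_right _ (by positivity)
            calc ((univ.filter (fun w => w ∉ bad T ε)).card : ℝ)
                ≤ ((univ : Finset (Fin T.n)).card : ℝ) := by
                  exact_mod_cast Finset.card_le_card (Finset.filter_subset _ _)
              _ = (T.n:ℝ) := by simp
    calc ∑ w, ((minR T w)^3 - minR T w)/8
        = (∑ w ∈ univ.filter (fun w => w ∈ bad T ε), ((minR T w)^3 - minR T w)/8)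
          + ∑ w ∈ univ.filter (fun w => w ∉ bad T ε), ((minR T w)^3 - minR T w)/8 :=
          hsplit.symm
      _ ≤ ((bad T ε).card : ℝ) * ((T.n:ℝ)^3/8) + (T.n:ℝ) * ((1/8 + 4*ε) * (T.n:ℝ)^3/8) :=
          add_le_add hbadpart hgoodpart
      _ ≤ (ε * (T.n:ℝ)) * ((T.n:ℝ)^3/8) + (T.n:ℝ) * ((1/8 + 4*ε) * (T.n:ℝ)^3/8) := by
          apply add_le_add_left
          apply mul_le_mul_of_nonneg_right hbad (by positivity)
      _ ≤ (1/64 + ε) * (T.n:ℝ)^4 := by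
          nlinarith [mul_nonneg hε0.le (pow_nonneg (le_trans zero_le_one hn1) 4),
            pow_nonneg (le_trans zero_le_one hn1) 4]
  linarith [hId, hsum]

end QR
namespace QR
open Finset

lemma aux_sq (a x y z : ℝ) (ha0 : 0 ≤ a) (hz : z^2 ≤ 1) :
    a * (x + y + z)^2 ≤ 3*(a*x^2) + (3/4)*((2*y)^2*a) + 3*a := by
  nlinarith [mul_nonneg ha0 (sq_nonneg (x - y)), mul_nonneg ha0 (sq_nonneg (y - z)),
    mul_nonneg ha0 (sq_nonneg (x - z)), mul_le_mul_of_nonneg_left hz ha0]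

lemma sum_sigma_sq (T : Tournament) (ε : ℝ) (hε0 : 0 < ε) (hε1 : ε ≤ 1) (hn : 1 ≤ T.n)
    (hbad : ((bad T ε).card : ℝ) ≤ ε * T.n) :
    ∑ v, (doutR T v - (T.n:ℝ)/2)^2 ≤ 2 * ε * (T.n:ℝ)^3 := by
  have hn1 : (1:ℝ) ≤ (T.n:ℝ) := by exact_mod_cast hn
  have hsplit := Finset.sum_filter_add_sum_filter_not univ
    (fun v => v ∈ bad T ε) (fun v => (doutR T v - (T.n:ℝ)/2)^2)
  have hbadpart : ∑ v ∈ univ.filter (fun v => v ∈ bad T ε), (doutR T v - (T.n:ℝ)/2)^2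
      ≤ ((bad T ε).card : ℝ) * ((T.n:ℝ)^2/4) := by
    have hb : ∀ v ∈ univ.filter (fun v => v ∈ bad T ε),
        (doutR T v - (T.n:ℝ)/2)^2 ≤ (T.n:ℝ)^2/4 := by
      intro v _
      have h1 := doutR_nonneg T v
      have h2 := doutR_le T v
      nlinarith
    calc ∑ v ∈ univ.filter (fun v => v ∈ bad T ε), (doutR T v - (T.n:ℝ)/2)^2
        ≤ ∑ _v ∈ univ.filter (fun v => v ∈ bad T ε), (T.n:ℝ)^2/4 := Finset.sum_le_sum hb
      _ = ((univ.filter (fun v => v ∈ bad T ε)).card : ℝ) * ((T.n:ℝ)^2/4) := by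
          rw [Finset.sum_const, nsmul_eq_mul]
      _ ≤ ((bad T ε).card : ℝ) * ((T.n:ℝ)^2/4) := by
          apply mul_le_mul_of_nonneg_right _ (by positivity)
          have heq : (univ.filter (fun v => v ∈ bad T ε)) = bad T ε := by ext v; simp
          rw [heq]
  have hgoodpart : ∑ v ∈ univ.filter (fun v => v ∉ bad T ε), (doutR T v - (T.n:ℝ)/2)^2
      ≤ (T.n:ℝ) * (ε^2 * (T.n:ℝ)^2) := by
    have hg : ∀ v ∈ univ.filter (fun v => v ∉ bad T ε),
        (doutR T v - (T.n:ℝ)/2)^2 ≤ ε^2 * (T.n:ℝ)^2 := by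
      intro v hv
      rw [Finset.mem_filter] at hv
      have hgb := good_bounds T ε v hv.2
      nlinarith [hgb.1, hgb.2]
    calc ∑ v ∈ univ.filter (fun v => v ∉ bad T ε), (doutR T v - (T.n:ℝ)/2)^2
        ≤ ∑ _v ∈ univ.filter (fun v => v ∉ bad T ε), ε^2 * (T.n:ℝ)^2 := Finset.sum_le_sum hg
      _ = ((univ.filter (fun v => v ∉ bad T ε)).card : ℝ) * (ε^2 * (T.n:ℝ)^2) := by
          rw [Finset.sum_const, nsmul_eq_mul]
      _ ≤ (T.n:ℝ) * (ε^2 * (T.n:ℝ)^2) := by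
          apply mul_le_mul_of_nonneg_right _ (by positivity)
          calc ((univ.filter (fun v => v ∉ bad T ε)).card : ℝ)
              ≤ ((univ : Finset (Fin T.n)).card : ℝ) := by
                exact_mod_cast Finset.card_le_card (Finset.filter_subset _ _)
            _ = (T.n:ℝ) := by simp
  have hfin : ((bad T ε).card : ℝ) * ((T.n:ℝ)^2/4) + (T.n:ℝ) * (ε^2 * (T.n:ℝ)^2)
      ≤ 2 * ε * (T.n:ℝ)^3 := by
    have h1 : ((bad T ε).card : ℝ) * ((T.n:ℝ)^2/4) ≤ (ε * (T.n:ℝ)) * ((T.n:ℝ)^2/4) := by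
      apply mul_le_mul_of_nonneg_right hbad (by positivity)
    nlinarith [mul_nonneg hε0.le (pow_nonneg (le_trans zero_le_one hn1) 3)]
  linarith [hsplit, hbadpart, hgoodpart, hfin]

lemma arc_g2_bound (T : Tournament) :
    ∑ v, ∑ w, aR T v w * (g2 T v w)^2
      ≤ 3 * DT T + (3/4) * (T.n:ℝ) * (∑ v, (doutR T v - (T.n:ℝ)/2)^2) + 3*(T.n:ℝ)^2 := by
  have hdecomp : ∀ v w : Fin T.n, g2 T v w
      = (qR T v w - (minR T w - 1)/2) + (-(doutR T v - (T.n:ℝ)/2)/2)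
        + (aR T v w - 1 + (if v = w then (1:ℝ) else 0)/4) := by
    intro v w; rw [g2_eq]; ring
  have hr : ∀ v w : Fin T.n, (aR T v w - 1 + (if v = w then (1:ℝ) else 0)/4)^2 ≤ 1 := by
    intro v w
    have h0 := aR_nonneg T v w
    have h1 := aR_le_one T v w
    split <;> nlinarith
  have hper : ∀ v w : Fin T.n, aR T v w * (g2 T v w)^2
      ≤ 3 * (aR T v w * (qR T v w - (minR T w - 1)/2)^2)
        + (3/4) * ((doutR T v - (T.n:ℝ)/2)^2 * aR T v w) + 3 * aR T v w := by
    intro v w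
    have := aux_sq (aR T v w) (qR T v w - (minR T w - 1)/2) (-(doutR T v - (T.n:ℝ)/2)/2)
      (aR T v w - 1 + (if v = w then (1:ℝ) else 0)/4) (aR_nonneg T v w) (hr v w)
    rw [← hdecomp v w] at this
    nlinarith [this]
  have hDT : ∑ v, ∑ w, aR T v w * (qR T v w - (minR T w - 1)/2)^2 = DT T :=
    Finset.sum_comm
  have hS2 : ∑ v, (doutR T v - (T.n:ℝ)/2)^2 * doutR T v
      ≤ (T.n:ℝ) * ∑ v, (doutR T v - (T.n:ℝ)/2)^2 := by
    calc ∑ v, (doutR T v - (T.n:ℝ)/2)^2 * doutR T v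
        ≤ ∑ v, (doutR T v - (T.n:ℝ)/2)^2 * (T.n:ℝ) :=
          Finset.sum_le_sum fun v _ =>
            mul_le_mul_of_nonneg_left (doutR_le T v) (sq_nonneg _)
      _ = (T.n:ℝ) * ∑ v, (doutR T v - (T.n:ℝ)/2)^2 := by
          rw [← Finset.sum_mul, mul_comm]
  have hS3 : ∑ v, doutR T v ≤ (T.n:ℝ)^2 := by
    rw [sum_doutR]
    nlinarith [Nat.cast_nonneg (α := ℝ) T.n]
  calc ∑ v, ∑ w, aR T v w * (g2 T v w)^2
      ≤ ∑ v, ∑ w, (3 * (aR T v w * (qR T v w - (minR T w - 1)/2)^2)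
        + (3/4) * ((doutR T v - (T.n:ℝ)/2)^2 * aR T v w) + 3 * aR T v w) :=
        Finset.sum_le_sum fun v _ => Finset.sum_le_sum fun w _ => hper v w
    _ = 3 * (∑ v, ∑ w, aR T v w * (qR T v w - (minR T w - 1)/2)^2)
        + (3/4) * (∑ v, (doutR T v - (T.n:ℝ)/2)^2 * doutR T v)
        + 3 * ∑ v, doutR T v := by
        simp only [Finset.sum_add_distrib]
        congr 1
        · congr 1
          · rw [Finset.mul_sum]
            exact Finset.sum_congr rfl fun v _ => by rw [Finset.mul_sum]
          · rw [Finset.mul_sum]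
            apply Finset.sum_congr rfl; intro v _
            rw [← Finset.mul_sum, ← Finset.mul_sum]
            rfl
        · rw [Finset.mul_sum]
          apply Finset.sum_congr rfl; intro v _
          rw [← Finset.mul_sum]
          rfl
    _ ≤ 3 * DT T + (3/4) * (T.n:ℝ) * (∑ v, (doutR T v - (T.n:ℝ)/2)^2) + 3*(T.n:ℝ)^2 := by
        rw [hDT]
        have h2 := hS2
        have h3 := hS3
        nlinarith [h2, h3]

end QR
namespace QR
open Finset

lemma g2_diag_bound (T : Tournament) (v : Fin T.n) :
    (g2 T v v)^2 ≤ ((T.n:ℝ)/4)^2 := by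
  have h : g2 T v v = - ∑ z, (gR T v z)^2 := by
    unfold g2
    rw [← Finset.sum_neg_distrib]
    apply Finset.sum_congr rfl; intro z _
    rw [gR_anti T v z]
    ring
  have h1 : 0 ≤ ∑ z, (gR T v z)^2 := Finset.sum_nonneg fun z _ => sq_nonneg _
  have h2 : ∑ z, (gR T v z)^2 ≤ (T.n:ℝ)/4 := by
    calc ∑ z, (gR T v z)^2 ≤ ∑ _z : Fin T.n, (1/4 : ℝ) := by
          apply Finset.sum_le_sum; intro z _
          have hab := abs_gR_le T v z
          nlinarith [sq_abs (gR T v z), abs_nonneg (gR T v z)]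
      _ = (T.n:ℝ)/4 := by
          rw [Finset.sum_const, Finset.card_univ, Fintype.card_fin, nsmul_eq_mul]; ring
  rw [h]
  rw [neg_pow]
  calc (-1:ℝ)^2 * (∑ z, (gR T v z)^2)^2 = (∑ z, (gR T v z)^2)^2 := by ring
    _ ≤ ((T.n:ℝ)/4)^2 := by nlinarith

lemma trg4_master (T : Tournament) (ε : ℝ) (hε0 : 0 < ε) (hε1 : ε ≤ 1) (hn : 1 ≤ T.n)
    (hbad : ((bad T ε).card : ℝ) ≤ ε * T.n) :
    trg4 T ≤ 6 * DT T + 3*ε*(T.n:ℝ)^4 + 6*(T.n:ℝ)^2 + (T.n:ℝ)^3/16 := by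
  have hsplit : ∀ v w : Fin T.n, (g2 T v w)^2
      = aR T v w * (g2 T v w)^2 + aR T w v * (g2 T v w)^2
        + (if v = w then (1:ℝ) else 0) * (g2 T v w)^2 := by
    intro v w
    have h := aR_add T v w
    rcases eq_or_ne v w with h' | h'
    · rw [if_pos h'] at h ⊢
      subst h'
      rw [aR_self]
      ring
    · rw [if_neg h'] at h ⊢
      linear_combination (-(g2 T v w)^2) * h
  have hsecond : ∑ v, ∑ w, aR T w v * (g2 T v w)^2 = ∑ v, ∑ w, aR T v w * (g2 T v w)^2 := by
    rw [Finset.sum_comm]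
    apply Finset.sum_congr rfl; intro w _
    apply Finset.sum_congr rfl; intro v _
    rw [g2_symm T w v]
  have hdiag : ∑ v, ∑ w, (if v = w then (1:ℝ) else 0) * (g2 T v w)^2 ≤ (T.n:ℝ)^3/16 := by
    have hper : ∀ v : Fin T.n, ∑ w, (if v = w then (1:ℝ) else 0) * (g2 T v w)^2
        = (g2 T v v)^2 := by
      intro v
      have hw : ∀ w : Fin T.n, (if v = w then (1:ℝ) else 0) * (g2 T v w)^2
          = if v = w then (g2 T v w)^2 else 0 := by
        intro w; split <;> ring
      rw [Finset.sum_congr rfl fun w _ => hw w,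
        Finset.sum_ite_eq univ v (fun w => (g2 T v w)^2), if_pos (Finset.mem_univ v)]
    rw [Finset.sum_congr rfl fun v _ => hper v]
    calc ∑ v, (g2 T v v)^2 ≤ ∑ _v : Fin T.n, ((T.n:ℝ)/4)^2 :=
          Finset.sum_le_sum fun v _ => g2_diag_bound T v
      _ = (T.n:ℝ) * ((T.n:ℝ)/4)^2 := by
          rw [Finset.sum_const, Finset.card_univ, Fintype.card_fin, nsmul_eq_mul]
      _ ≤ (T.n:ℝ)^3/16 := by nlinarith [Nat.cast_nonneg (α := ℝ) T.n]
  have harc := arc_g2_bound T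
  have hsig := sum_sigma_sq T ε hε0 hε1 hn hbad
  have htr : trg4 T = ∑ v, ∑ w, aR T v w * (g2 T v w)^2 + ∑ v, ∑ w, aR T w v * (g2 T v w)^2
      + ∑ v, ∑ w, (if v = w then (1:ℝ) else 0) * (g2 T v w)^2 := by
    unfold trg4
    rw [Finset.sum_congr rfl fun v (_ : v ∈ univ) =>
      Finset.sum_congr rfl fun w (_ : w ∈ univ) => hsplit v w]
    simp only [Finset.sum_add_distrib]
  have hn1 : (1:ℝ) ≤ (T.n:ℝ) := by exact_mod_cast hn
  have hDT0 : 0 ≤ DT T := by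
    apply Finset.sum_nonneg; intro w _
    apply Finset.sum_nonneg; intro v _
    exact mul_nonneg (aR_nonneg T v w) (sq_nonneg _)
  rw [htr, hsecond]
  nlinarith [harc, hsig, hdiag, hn1, mul_le_mul_of_nonneg_left hsig
    (by positivity : (0:ℝ) ≤ (3/4) * (T.n:ℝ))]

end QR
namespace QR
open Finset Filter Topology

lemma exp_H5 : H5.n * (H5.n - 1) / 2 = 6 := rfl

lemma homDensity_nonneg (H T : Tournament) : 0 ≤ homDensity H T := by
  unfold homDensity
  positivity

/-- Step A: sizes tend to infinity. -/
lemma size_atTop (T : ℕ → Tournament) (hreg : NearlyRegular T)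
    (hdens : Tendsto (fun n => homDensity H5 (T n)) atTop
      (𝓝 ((1/2 : ℝ) ^ (H5.n * (H5.n - 1) / 2)))) :
    Tendsto (fun n => (T n).n) atTop atTop := by
  rw [tendsto_atTop]
  intro N
  have hεpos : (0:ℝ) < 1/(3*(N+1)) := by positivity
  obtain ⟨n₀, hn₀⟩ := hreg (1/(3*(N+1))) hεpos
  have hlim : (0:ℝ) < (1/2 : ℝ) ^ (H5.n * (H5.n - 1) / 2) := by positivity
  have hpos : ∀ᶠ n in atTop, 0 < homDensity H5 (T n) :=
    hdens.eventually (eventually_gt_nhds hlim)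
  filter_upwards [hpos, eventually_ge_atTop n₀] with n hp hn
  by_contra hN
  push_neg at hN
  have h1 : 1 ≤ (T n).n := by
    by_contra h1
    push_neg at h1
    have hz : (T n).n = 0 := by omega
    unfold homDensity at hp
    rw [hz] at hp
    have hz4 : ((0:ℕ):ℝ)^H5.n = 0 := by
      norm_num [show H5.n = 4 from rfl]
    rw [hz4, div_zero] at hp
    exact lt_irrefl _ hp
  have hbad : ((bad (T n) (1/(3*(N+1)))).card : ℝ) ≤ (1/(3*(N+1))) * (T n).n := by
    have := hn₀ n hn
    rw [bad_card_eq] at this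
    exact this
  have h3 := three_eps (T n) (1/(3*(N+1))) hεpos h1 hbad
  -- 1 ≤ 3 * (1/(3(N+1))) * n = n/(N+1)
  have hNn : ((N:ℝ) + 1) ≤ (T n).n := by
    have h4 := mul_le_mul_of_nonneg_left h3 (by positivity : (0:ℝ) ≤ 3*((N:ℝ)+1))
    rw [mul_one] at h4
    have h5 : 3*((N:ℝ)+1) * (3 * (1/(3*((N:ℝ)+1))) * ((T n).n:ℝ)) = 3 * ((T n).n:ℝ) := by
      field_simp
    rw [h5] at h4
    linarith
  have : (N:ℝ) < (T n).n := by linarith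
  have : N < (T n).n := by exact_mod_cast this
  omega

/-- Step B+C: the spectral defect vanishes. -/
lemma trg4_tendsto (T : ℕ → Tournament) (hreg : NearlyRegular T)
    (hdens : Tendsto (fun n => homDensity H5 (T n)) atTop
      (𝓝 ((1/2 : ℝ) ^ (H5.n * (H5.n - 1) / 2))))
    (hsize : Tendsto (fun n => (T n).n) atTop atTop) :
    Tendsto (fun n => trg4 (T n) / ((T n).n : ℝ)^4) atTop (𝓝 0) := by
  rw [Metric.tendsto_nhds]
  intro δ hδ
  set ε : ℝ := min 1 (δ/20) with hε
  have hε0 : 0 < ε := by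
    rw [hε]; positivity
  have hε1 : ε ≤ 1 := min_le_left _ _
  have hεδ : ε ≤ δ/20 := min_le_right _ _
  obtain ⟨n₀, hn₀⟩ := hreg ε hε0
  have hdens' : ∀ᶠ n in atTop,
      |homDensity H5 (T n) - (1/2 : ℝ) ^ (H5.n * (H5.n - 1) / 2)| < ε := by
    have := Metric.tendsto_nhds.mp hdens ε hε0
    filter_upwards [this] with n h
    rwa [Real.dist_eq] at h
  have hbig : ∀ᶠ n in atTop, (28/δ : ℝ) ≤ ((T n).n : ℝ) := by
    have h1 := hsize.eventually_ge_atTop (Nat.ceil (28/δ))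
    filter_upwards [h1] with n h
    calc (28/δ : ℝ) ≤ (Nat.ceil (28/δ) : ℝ) := Nat.le_ceil _
      _ ≤ ((T n).n : ℝ) := by exact_mod_cast h
  filter_upwards [hdens', hbig, eventually_ge_atTop n₀,
    hsize.eventually_ge_atTop 1] with n hd hb hn h1
  have hn1 : (1:ℝ) ≤ ((T n).n : ℝ) := by exact_mod_cast h1
  have hn0 : (0:ℝ) < ((T n).n : ℝ) := by linarith
  have hbad : ((bad (T n) ε).card : ℝ) ≤ ε * (T n).n := by
    have := hn₀ n hn
    rw [bad_card_eq] at this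
    exact this
  have hDT := DT_bound (T n) ε hε0 hε1 h1 hbad
  have htrg := trg4_master (T n) ε hε0 hε1 h1 hbad
  have hhom : (homCount H5 (T n) : ℝ) = homDensity H5 (T n) * ((T n).n : ℝ)^4 := by
    have h4 : ((T n).n:ℝ)^H5.n = ((T n).n:ℝ)^4 := rfl
    unfold homDensity
    rw [h4, div_mul_cancel₀ _ (by positivity : ((T n).n:ℝ)^4 ≠ 0)]
  have hval : ((1/2 : ℝ) ^ (H5.n * (H5.n - 1) / 2)) = 1/64 := by
    rw [exp_H5]; norm_num
  rw [hval] at hd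
  have habs := abs_lt.mp hd
  have hden_lb : 1/64 - ε < homDensity H5 (T n) := by linarith [habs.1]
  -- combine
  have hDT2 : DT (T n) ≤ (4/3) * ε * ((T n).n : ℝ)^4 := by
    have h2 : (3/2) * DT (T n) ≤ (1/64 + ε) * ((T n).n : ℝ)^4
        - (1/64 - ε) * ((T n).n : ℝ)^4 := by
      rw [hhom] at hDT
      nlinarith [pow_pos hn0 4, hDT, hden_lb]
    nlinarith [h2]
  have htr2 : trg4 (T n) ≤ 11 * ε * ((T n).n : ℝ)^4 + 7 * ((T n).n : ℝ)^3 := by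
    nlinarith [htrg, hDT2, hn1, pow_le_pow_left₀ (by linarith : (0:ℝ) ≤ 1) hn1 2,
      sq_nonneg ((T n).n : ℝ), pow_pos hn0 3, pow_pos hn0 2]
  have hsmall : 7 * ((T n).n : ℝ)^3 ≤ (δ/4) * ((T n).n : ℝ)^4 := by
    have : (28/δ) * ((T n).n : ℝ)^3 ≤ ((T n).n : ℝ) * ((T n).n : ℝ)^3 := by
      apply mul_le_mul_of_nonneg_right hb (by positivity)
    calc 7 * ((T n).n : ℝ)^3 = (δ/4) * ((28/δ) * ((T n).n : ℝ)^3) := by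
          field_simp
          ring
        _ ≤ (δ/4) * (((T n).n : ℝ) * ((T n).n : ℝ)^3) := by
          apply mul_le_mul_of_nonneg_left this (by positivity)
        _ = (δ/4) * ((T n).n : ℝ)^4 := by ring
  have hfinal : trg4 (T n) < δ * ((T n).n : ℝ)^4 := by
    have h11' := mul_le_mul_of_nonneg_right hεδ
      (by positivity : (0:ℝ) ≤ 11 * ((T n).n:ℝ)^4)
    have hpos4 := mul_pos hδ (pow_pos hn0 4)
    linarith [htr2, hsmall, h11']
  rw [Real.dist_eq, sub_zero]
  rw [abs_of_nonneg (div_nonneg (trg4_nonneg (T n)) (pow_pos hn0 4).le)]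
  rw [div_lt_iff₀ (pow_pos hn0 4)]
  linarith [hfinal]

/-- The main forcing lemma for `H5`. -/
lemma main5 (T : ℕ → Tournament) (hreg : NearlyRegular T)
    (hdens : Tendsto (fun n => homDensity H5 (T n)) atTop
      (𝓝 ((1/2 : ℝ) ^ (H5.n * (H5.n - 1) / 2)))) :
    Quasirandom T := by
  have hsize := size_atTop T hreg hdens
  have htrg := trg4_tendsto T hreg hdens hsize
  have hbeta : Tendsto (fun n => beta (T n) / ((T n).n : ℝ)) atTop (𝓝 0) := by
    have hcomp : Tendsto (fun n => Real.sqrt (Real.sqrt (trg4 (T n) / ((T n).n : ℝ)^4)))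
        atTop (𝓝 0) := by
      have hs : Tendsto Real.sqrt (𝓝 0) (𝓝 0) :=
        Real.continuous_sqrt.tendsto' 0 0 Real.sqrt_zero
      exact hs.comp (hs.comp htrg)
    apply hcomp.congr'
    filter_upwards [hsize.eventually_ge_atTop 1] with n h1
    have hn0 : (0:ℝ) < ((T n).n : ℝ) := by exact_mod_cast h1
    have htnn : 0 ≤ trg4 (T n) := trg4_nonneg (T n)
    rw [beta]
    rw [show trg4 (T n) / ((T n).n : ℝ)^4 = trg4 (T n) / (((T n).n : ℝ)^2)^2 from by ring_nf,
      Real.sqrt_div htnn, Real.sqrt_sq (by positivity)]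
    rw [Real.sqrt_div (Real.sqrt_nonneg _), Real.sqrt_sq hn0.le]
  intro H
  rw [← tendsto_sub_nhds_zero_iff]
  apply squeeze_zero_norm'
    (a := fun n => ((H.n * (H.n - 1) / 2 : ℕ) : ℝ) * (beta (T n) + 1/2) / ((T n).n : ℝ))
  · filter_upwards [hsize.eventually_ge_atTop 1] with n h1
    exact density_bound H (T n) h1
  · have h1n : Tendsto (fun n => (((T n).n : ℝ))⁻¹) atTop (𝓝 0) :=
      (tendsto_natCast_atTop_atTop.comp hsize).inv_tendsto_atTop
    have heq : (fun n => ((H.n * (H.n - 1) / 2 : ℕ) : ℝ) * (beta (T n) + 1/2) / ((T n).n : ℝ))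
        = fun n => ((H.n * (H.n - 1) / 2 : ℕ) : ℝ) * (beta (T n) / ((T n).n : ℝ))
          + (((H.n * (H.n - 1) / 2 : ℕ) : ℝ)/2) * (((T n).n : ℝ))⁻¹ := by
      funext n
      ring
    rw [heq]
    have := (hbeta.const_mul ((H.n * (H.n - 1) / 2 : ℕ) : ℝ)).add
      (h1n.const_mul (((H.n * (H.n - 1) / 2 : ℕ) : ℝ)/2))
    simpa using this

end QR
namespace QR
open Finset Filter Topology

lemma outDeg_rev_cast (T : Tournament) (v : Fin T.n) :
    (outDeg T.reverse v : ℝ) = (T.n:ℝ) - 1 - (outDeg T v : ℝ) := by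
  calc (outDeg T.reverse v : ℝ) = doutR T.reverse v := outDeg_cast _ _
    _ = minR T v := rfl
    _ = (T.n:ℝ) - 1 - doutR T v := minR_eq T v
    _ = (T.n:ℝ) - 1 - (outDeg T v : ℝ) := by rw [outDeg_cast]

lemma nearlyRegular_reverse (T : ℕ → Tournament) (hreg : NearlyRegular T) :
    NearlyRegular (fun k => (T k).reverse) := by
  intro ε hε
  have hδ : (0:ℝ) < ε/6 := by positivity
  obtain ⟨n₀, hn₀⟩ := hreg (ε/6) hδ
  refine ⟨n₀, fun n hn => ?_⟩
  have hrw := bad_card_eq ((T n).reverse) ε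
  rw [hrw]
  rcases Nat.eq_zero_or_pos (T n).n with hz | hpos
  · have h2 : ((T n).reverse).n = 0 := hz
    have h := Finset.card_le_univ (bad ((T n).reverse) ε)
    have h3 : Fintype.card (Fin ((T n).reverse).n) = 0 := by
      simp [h2]
    have h0 : (bad ((T n).reverse) ε).card = 0 := by omega
    rw [h0, h2]
    norm_num
  · have hbadδ := hn₀ n hn
    rw [bad_card_eq] at hbadδ
    have h3 := three_eps (T n) (ε/6) hδ hpos hbadδ
    have hm0 : (0:ℝ) < ((T n).n : ℝ) := by exact_mod_cast hpos
    have hsub : bad ((T n).reverse) ε ⊆ bad (T n) (ε/6) := by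
      intro v hv
      rw [bad, Finset.mem_filter] at hv
      refine Finset.mem_filter.mpr ⟨Finset.mem_univ _, ?_⟩
      intro hcond
      apply hv.2
      have hrev := outDeg_rev_cast (T n) v
      have hmrev : ((((T n).reverse)).n : ℝ) = ((T n).n : ℝ) := rfl
      constructor
      · rw [hmrev, hrev]
        have := hcond.2
        nlinarith [hcond.2, h3, hm0, hε]
      · rw [hmrev, hrev]
        nlinarith [hcond.1, hm0, hε]
    calc ((bad ((T n).reverse) ε).card : ℝ) ≤ ((bad (T n) (ε/6)).card : ℝ) := by
          exact_mod_cast Finset.card_le_card hsub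
      _ ≤ (ε/6) * (T n).n := hbadδ
      _ ≤ ε * (((T n).reverse).n : ℝ) := by
          rw [show ((((T n).reverse)).n : ℝ) = ((T n).n : ℝ) from rfl]
          nlinarith [hm0, hε]

def pi4 : Fin 4 → Fin 4 := ![1, 0, 2, 3]

lemma homCount_H7_rev (T : Tournament) : homCount H7 T = homCount H5 T.reverse := by
  apply Nat.card_congr
  have harc1 : ∀ i j : Fin 4, H5.arc i j = true → H7.arc (pi4 j) (pi4 i) = true := by
    intro i j; fin_cases i <;> fin_cases j <;> decide
  have harc2 : ∀ i j : Fin 4, H7.arc i j = true → H5.arc (pi4 j) (pi4 i) = true := by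
    intro i j; fin_cases i <;> fin_cases j <;> decide
  have hππ : ∀ x : Fin 4, pi4 (pi4 x) = x := by decide
  exact {
    toFun := fun f => ⟨fun x => f.1 (pi4 x), fun i j hij => f.2 (pi4 j) (pi4 i) (harc1 i j hij)⟩
    invFun := fun g => ⟨fun x => g.1 (pi4 x), fun i j hij => g.2 (pi4 j) (pi4 i) (harc2 i j hij)⟩
    left_inv := fun f => by
      apply Subtype.ext
      funext x
      show f.1 (pi4 (pi4 x)) = f.1 x
      exact congrArg f.1 (hππ x)
    right_inv := fun g => by
      apply Subtype.ext
      funext x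
      show g.1 (pi4 (pi4 x)) = g.1 x
      exact congrArg g.1 (hππ x) }

lemma homDensity_H7_rev (T : Tournament) : homDensity H7 T = homDensity H5 T.reverse := by
  unfold homDensity
  rw [homCount_H7_rev]
  rfl

lemma homCount_reverse (H T : Tournament) : homCount H T = homCount H.reverse T.reverse := by
  apply Nat.card_congr
  exact Equiv.subtypeEquivRight fun f =>
    ⟨fun hp i j hij => hp j i hij, fun hq i j hij => hq j i hij⟩

lemma homDensity_reverse (H T : Tournament) :
    homDensity H.reverse T.reverse = homDensity H T := by
  unfold homDensity
  rw [← homCount_reverse]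
  rfl

end QR

theorem statement_14' : ForcesQRRegular H5 ∧ ForcesQRRegular H7 := by
  constructor
  · intro T hreg hdens
    exact QR.main5 T hreg hdens
  · intro T hreg hdens
    have hrev := QR.nearlyRegular_reverse T hreg
    have hdens' : Filter.Tendsto (fun n => homDensity H5 ((T n).reverse)) Filter.atTop
        (nhds ((1/2:ℝ)^(H5.n*(H5.n-1)/2))) := by
      have hexp : ((1/2:ℝ)^(H7.n*(H7.n-1)/2)) = ((1/2:ℝ)^(H5.n*(H5.n-1)/2)) := rfl
      rw [← hexp]
      exact hdens.congr (fun n => QR.homDensity_H7_rev (T n))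
    have hq := QR.main5 (fun n => (T n).reverse) hrev hdens'
    intro H
    have hH := hq H.reverse
    have hexp2 : H.reverse.n * (H.reverse.n - 1) / 2 = H.n * (H.n - 1)/2 := rfl
    rw [hexp2] at hH
    exact hH.congr (fun n => QR.homDensity_reverse H (T n))

/-- The tournaments H₅ and H₇ force quasirandomness in regular tournaments. -/
theorem statement_14 : ForcesQRRegular H5 ∧ ForcesQRRegular H7 := by
  exact statement_14'
end

section
/- For every z ∈ [0,1/2], the tournamenton U_z satisfies t(H₁₉, U_z) = 1/1024 + (5/288)z⁴ − (5/36)z⁶ + (5/162)z⁸. -/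
open MeasureTheory Filter Topology

/-- The step function underlying the tournamenton `W_{C₃}`: `[0,1]` is divided into
the three consecutive intervals `[0,1/3), [1/3,2/3), [2/3,1]`, with value 1 on blocks
corresponding to the arcs of `C₃`, value 1/2 on diagonal blocks, and 0 otherwise. -/
noncomputable def WC3fun (x y : ℝ) : ℝ :=
  if x < 1/3 then (if y < 1/3 then 1/2 else if y < 2/3 then 1 else 0)
  else if x < 2/3 then (if y < 1/3 then 0 else if y < 2/3 then 1/2 else 1)
  else (if y < 1/3 then 1 else if y < 2/3 then 0 else 1/2)

lemma measurable_WC3fun : Measurable (Function.uncurry WC3fun) := by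
  have hx1 : MeasurableSet {p : ℝ × ℝ | p.1 < 1/3} :=
    measurableSet_lt measurable_fst measurable_const
  have hx2 : MeasurableSet {p : ℝ × ℝ | p.1 < 2/3} :=
    measurableSet_lt measurable_fst measurable_const
  have hy1 : MeasurableSet {p : ℝ × ℝ | p.2 < 1/3} :=
    measurableSet_lt measurable_snd measurable_const
  have hy2 : MeasurableSet {p : ℝ × ℝ | p.2 < 2/3} :=
    measurableSet_lt measurable_snd measurable_const
  unfold Function.uncurry WC3fun
  exact Measurable.ite hx1
    (Measurable.ite hy1 measurable_const
      (Measurable.ite hy2 measurable_const measurable_const))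
    (Measurable.ite hx2
      (Measurable.ite hy1 measurable_const
        (Measurable.ite hy2 measurable_const measurable_const))
      (Measurable.ite hy1 measurable_const
        (Measurable.ite hy2 measurable_const measurable_const)))

lemma WC3fun_bounds (x y : ℝ) : 0 ≤ WC3fun x y ∧ WC3fun x y ≤ 1 := by
  unfold WC3fun; split_ifs <;> norm_num

lemma WC3fun_skew (x y : ℝ) : WC3fun x y + WC3fun y x = 1 := by
  unfold WC3fun; split_ifs <;> linarith

/-- The tournamenton `W_{C₃}`. -/
noncomputable def WC3 : Tournamenton where
  W := WC3fun
  measurable := measurable_WC3fun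
  nonneg := fun x _ y _ => (WC3fun_bounds x y).1
  le_one := fun x _ y _ => (WC3fun_bounds x y).2
  skew := fun x _ y _ => WC3fun_skew x y

/-- The tournamenton `U_z` defined by `U_z(x,y) = 1/2 + z·(2·W_{C₃}(x,y) − 1)`,
for `z ∈ [0, 1/2]`. -/
noncomputable def Uz (z : ℝ) (hz : z ∈ Set.Icc (0:ℝ) (1/2)) : Tournamenton where
  W := fun x y => 1/2 + z * (2 * WC3fun x y - 1)
  measurable := by
    have h : Function.uncurry (fun x y => 1/2 + z * (2 * WC3fun x y - 1))
        = fun p : ℝ × ℝ => 1/2 + z * (2 * Function.uncurry WC3fun p - 1) := rfl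
    rw [h]
    exact measurable_const.add
      (((measurable_WC3fun.const_mul 2).sub measurable_const).const_mul z)
  nonneg := by
    intro x _ y _
    obtain ⟨h0, h1⟩ := WC3fun_bounds x y
    obtain ⟨hz0, hz1⟩ := hz
    nlinarith [mul_nonneg hz0 h0]
  le_one := by
    intro x _ y _
    obtain ⟨h0, h1⟩ := WC3fun_bounds x y
    obtain ⟨hz0, hz1⟩ := hz
    nlinarith [mul_nonneg hz0 (sub_nonneg.mpr h1)]
  skew := by
    intro x _ y _
    have h := WC3fun_skew x y
    linear_combination 2 * z * h


noncomputable def w3 : Fin 3 → Fin 3 → ℝ := ![![1/2,1,0],![0,1/2,1],![1,0,1/2]]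

noncomputable def idx3 (x : ℝ) : Fin 3 := if x < 1/3 then 0 else if x < 2/3 then 1 else 2

lemma WC3fun_eq_w3 (x y : ℝ) : WC3fun x y = w3 (idx3 x) (idx3 y) := by
  unfold WC3fun idx3
  split_ifs <;> rfl

def J3 : Fin 3 → Set ℝ := ![Set.Ico 0 (1/3), Set.Ico (1/3) (2/3), Set.Icc (2/3) 1]

lemma measurableSet_J3 (b : Fin 3) : MeasurableSet (J3 b) := by
  fin_cases b
  · exact measurableSet_Ico
  · exact measurableSet_Ico
  · exact measurableSet_Icc

lemma integral_J3 (b : Fin 3) : (∫ x : ℝ, (J3 b).indicator (fun _ => (1:ℝ)) x) = 1/3 := by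
  rw [show (fun _ => (1:ℝ)) = (1 : ℝ → ℝ) from rfl, integral_indicator_one (measurableSet_J3 b)]
  fin_cases b <;>
    simp [J3, Real.volume_Ico, Real.volume_Icc] <;>
    norm_num

lemma volume_J3 (b : Fin 3) : volume (J3 b) = ENNReal.ofReal (1/3) := by
  fin_cases b <;> simp [J3, Real.volume_Ico, Real.volume_Icc] <;> norm_num <;> rw [ENNReal.ofReal_div_of_pos] <;> simp

lemma mem_J3_of (x : ℝ) (hx : x ∈ Set.Icc (0:ℝ) 1) : x ∈ J3 (idx3 x) := by
  obtain ⟨h0, h1⟩ := hx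
  unfold idx3
  split_ifs with h h' <;> simp [J3] <;> constructor <;> linarith

lemma J3_disj {x : ℝ} {b c : Fin 3} (hb : x ∈ J3 b) (hc : x ∈ J3 c) : b = c := by
  fin_cases b <;> fin_cases c <;> simp_all [J3] <;>
    (exfalso; obtain ⟨p,q⟩ := hb; obtain ⟨r,s⟩ := hc; linarith)

lemma not_mem_J3 {x : ℝ} (hx : x ∉ Set.Icc (0:ℝ) 1) (b : Fin 3) : x ∉ J3 b := by
  intro h
  apply hx
  fin_cases b <;> simp [J3] at h <;> exact ⟨by linarith [h.1], by linarith [h.2]⟩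

lemma prod_ind_eq (a : Fin 5 → Fin 3) :
    (fun x : Fin 5 → ℝ => ∏ i, (J3 (a i)).indicator (fun _ => (1:ℝ)) (x i))
      = (Set.univ.pi fun i => J3 (a i)).indicator (fun _ => (1:ℝ)) := by
  funext x
  by_cases h : ∀ i, x i ∈ J3 (a i)
  · rw [Set.indicator_of_mem (by simpa [Set.mem_pi] using h)]
    exact Finset.prod_eq_one (fun i _ => Set.indicator_of_mem (h i) _)
  · push_neg at h
    obtain ⟨i0, hi0⟩ := h
    rw [Set.indicator_of_notMem (by simp [Set.mem_pi]; exact ⟨i0, hi0⟩)]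
    exact Finset.prod_eq_zero (Finset.mem_univ i0) (Set.indicator_of_notMem hi0 _)

lemma integrable_term (a : Fin 5 → Fin 3) :
    Integrable (fun x : Fin 5 → ℝ => ∏ i, (J3 (a i)).indicator (fun _ => (1:ℝ)) (x i)) := by
  rw [prod_ind_eq]
  rw [integrable_indicator_iff (MeasurableSet.univ_pi fun i => measurableSet_J3 (a i))]
  refine integrableOn_const (ne_of_lt ?_)
  rw [volume_pi_pi]
  simp only [volume_J3]
  exact ENNReal.prod_lt_top (fun i _ => ENNReal.ofReal_lt_top)

lemma integral_step (G : (Fin 5 → Fin 3) → ℝ) :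
    (∫ x in Set.univ.pi (fun _ : Fin 5 => Set.Icc (0:ℝ) 1), G (fun i => idx3 (x i)))
      = ∑ a : Fin 5 → Fin 3, G a * (1/3)^5 := by
  rw [← integral_indicator (MeasurableSet.univ_pi fun _ => measurableSet_Icc)]
  have hpt : (Set.univ.pi (fun _ : Fin 5 => Set.Icc (0:ℝ) 1)).indicator
      (fun x => G (fun i => idx3 (x i)))
      = fun x => ∑ a : Fin 5 → Fin 3, G a * ∏ i, (J3 (a i)).indicator (fun _ => (1:ℝ)) (x i) := by
    funext x
    by_cases hx : x ∈ Set.univ.pi (fun _ : Fin 5 => Set.Icc (0:ℝ) 1)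
    · rw [Set.indicator_of_mem hx]
      have hxi : ∀ i, x i ∈ Set.Icc (0:ℝ) 1 := fun i => hx i (Set.mem_univ i)
      rw [Finset.sum_eq_single (fun i => idx3 (x i))]
      · rw [Finset.prod_eq_one (fun i _ => Set.indicator_of_mem (mem_J3_of (x i) (hxi i)) _),
          mul_one]
      · intro a _ ha
        have hex : ∃ i, a i ≠ idx3 (x i) := by
          by_contra hc; push_neg at hc; exact ha (funext hc)
        obtain ⟨i0, hi0⟩ := hex
        rw [Finset.prod_eq_zero (Finset.mem_univ i0), mul_zero]
        exact Set.indicator_of_notMem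
          (fun hmem => hi0 (J3_disj hmem (mem_J3_of (x i0) (hxi i0)))) _
      · intro h; exact absurd (Finset.mem_univ _) h
    · rw [Set.indicator_of_notMem hx]
      have hex : ∃ i0, x i0 ∉ Set.Icc (0:ℝ) 1 := by
        by_contra hc; push_neg at hc; exact hx (fun i _ => hc i)
      obtain ⟨i0, hi0⟩ := hex
      refine (Finset.sum_eq_zero fun a _ => ?_).symm
      rw [Finset.prod_eq_zero (Finset.mem_univ i0)
        (Set.indicator_of_notMem (not_mem_J3 hi0 _) _), mul_zero]
  rw [hpt]
  rw [integral_finset_sum _ (fun a _ => ((integrable_term a).const_mul (G a)))]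
  refine Finset.sum_congr rfl fun a _ => ?_
  rw [integral_const_mul]
  congr 1
  calc (∫ x : Fin 5 → ℝ, ∏ i, (J3 (a i)).indicator (fun _ => (1:ℝ)) (x i))
      = ∏ i : Fin 5, ∫ t : ℝ, (J3 (a i)).indicator (fun _ => (1:ℝ)) t :=
        MeasureTheory.integral_fintype_prod_eq_prod
          (fun i t => (J3 (a i)).indicator (fun _ => (1:ℝ)) t)
    _ = (1/3)^5 := by simp [integral_J3]

def e5 : (Fin 3 × Fin 3 × Fin 3 × Fin 3 × Fin 3) ≃ (Fin 5 → Fin 3) where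
  toFun q := ![q.1, q.2.1, q.2.2.1, q.2.2.2.1, q.2.2.2.2]
  invFun a := (a 0, a 1, a 2, a 3, a 4)
  left_inv q := rfl
  right_inv a := by funext i; fin_cases i <;> rfl

noncomputable def Gz (z : ℝ) (a : Fin 5 → Fin 3) : ℝ :=
  ∏ i : Fin 5, ∏ j : Fin 5, if H19.arc i j then (1/2 + z * (2 * w3 (a i) (a j) - 1)) else 1

noncomputable def T5 (z : ℝ) (b0 b1 b2 b3 b4 : Fin 3) : ℝ :=
  (1 / 2 + z * (2 * w3 b0 b1 - 1)) * (1 / 2 + z * (2 * w3 b0 b2 - 1)) *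
            ((1 / 2 + z * (2 * w3 b1 b2 - 1)) * (1 / 2 + z * (2 * w3 b1 b3 - 1))) *
          ((1 / 2 + z * (2 * w3 b2 b3 - 1)) * (1 / 2 + z * (2 * w3 b2 b4 - 1))) *
        ((1 / 2 + z * (2 * w3 b3 b0 - 1)) * (1 / 2 + z * (2 * w3 b3 b4 - 1))) *
      ((1 / 2 + z * (2 * w3 b4 b0 - 1)) * (1 / 2 + z * (2 * w3 b4 b1 - 1)))

lemma Gz_eval (z : ℝ) (b0 b1 b2 b3 b4 : Fin 3) :
    Gz z ![b0,b1,b2,b3,b4] = T5 z b0 b1 b2 b3 b4 := by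
  simp only [Gz, T5, Fin.prod_univ_five,
    show H19.arc (0:Fin 5) (0:Fin 5) = false from rfl,
    show H19.arc (0:Fin 5) (1:Fin 5) = true from rfl,
    show H19.arc (0:Fin 5) (2:Fin 5) = true from rfl,
    show H19.arc (0:Fin 5) (3:Fin 5) = false from rfl,
    show H19.arc (0:Fin 5) (4:Fin 5) = false from rfl,
    show H19.arc (1:Fin 5) (0:Fin 5) = false from rfl,
    show H19.arc (1:Fin 5) (1:Fin 5) = false from rfl,
    show H19.arc (1:Fin 5) (2:Fin 5) = true from rfl,
    show H19.arc (1:Fin 5) (3:Fin 5) = true from rfl,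
    show H19.arc (1:Fin 5) (4:Fin 5) = false from rfl,
    show H19.arc (2:Fin 5) (0:Fin 5) = false from rfl,
    show H19.arc (2:Fin 5) (1:Fin 5) = false from rfl,
    show H19.arc (2:Fin 5) (2:Fin 5) = false from rfl,
    show H19.arc (2:Fin 5) (3:Fin 5) = true from rfl,
    show H19.arc (2:Fin 5) (4:Fin 5) = true from rfl,
    show H19.arc (3:Fin 5) (0:Fin 5) = true from rfl,
    show H19.arc (3:Fin 5) (1:Fin 5) = false from rfl,
    show H19.arc (3:Fin 5) (2:Fin 5) = false from rfl,
    show H19.arc (3:Fin 5) (3:Fin 5) = false from rfl,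
    show H19.arc (3:Fin 5) (4:Fin 5) = true from rfl,
    show H19.arc (4:Fin 5) (0:Fin 5) = true from rfl,
    show H19.arc (4:Fin 5) (1:Fin 5) = true from rfl,
    show H19.arc (4:Fin 5) (2:Fin 5) = false from rfl,
    show H19.arc (4:Fin 5) (3:Fin 5) = false from rfl,
    show H19.arc (4:Fin 5) (4:Fin 5) = false from rfl,
    show (![b0,b1,b2,b3,b4] : Fin 5 → Fin 3) 0 = b0 from rfl,
    show (![b0,b1,b2,b3,b4] : Fin 5 → Fin 3) 1 = b1 from rfl,
    show (![b0,b1,b2,b3,b4] : Fin 5 → Fin 3) 2 = b2 from rfl,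
    show (![b0,b1,b2,b3,b4] : Fin 5 → Fin 3) 3 = b3 from rfl,
    show (![b0,b1,b2,b3,b4] : Fin 5 → Fin 3) 4 = b4 from rfl,
    if_true, Bool.false_eq_true, if_false, one_mul, mul_one]

set_option maxHeartbeats 2000000 in
lemma sum_T5 (z : ℝ) :
    ∑ q : Fin 3 × Fin 3 × Fin 3 × Fin 3 × Fin 3,
      T5 z q.1 q.2.1 q.2.2.1 q.2.2.2.1 q.2.2.2.2 * (1/3:ℝ)^5
    = 1/1024 + (5/288) * z^4 - (5/36) * z^6 + (5/162) * z^8 := by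
  simp only [Fintype.sum_prod_type, Fin.sum_univ_three, T5, show w3 0 0 = 1/2 from rfl, show w3 0 1 = 1 from rfl, show w3 0 2 = 0 from rfl, show w3 1 0 = 0 from rfl, show w3 1 1 = 1/2 from rfl, show w3 1 2 = 1 from rfl, show w3 2 0 = 1 from rfl, show w3 2 1 = 0 from rfl, show w3 2 2 = 1/2 from rfl]
  norm_num
  ring


/-- For every `z ∈ [0,1/2]`,
`t(H₁₉, U_z) = 1/1024 + (5/288)z⁴ − (5/36)z⁶ + (5/162)z⁸`. -/
theorem statement_19 (z : ℝ) (hz : z ∈ Set.Icc (0:ℝ) (1/2)) :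
    tonDensity H19 (Uz z hz) =
      1/1024 + (5/288) * z^4 - (5/36) * z^6 + (5/162) * z^8 := by
  calc tonDensity H19 (Uz z hz)
      = ∫ x in Set.univ.pi (fun _ : Fin 5 => Set.Icc (0:ℝ) 1),
          ∏ i : Fin 5, ∏ j : Fin 5,
            if H19.arc i j then (1/2 + z * (2 * WC3fun (x i) (x j) - 1)) else 1 := rfl
    _ = ∫ x in Set.univ.pi (fun _ : Fin 5 => Set.Icc (0:ℝ) 1), Gz z (fun i => idx3 (x i)) := by
          simp only [WC3fun_eq_w3]; rfl
    _ = ∑ a : Fin 5 → Fin 3, Gz z a * (1/3)^5 := integral_step (Gz z)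
    _ = ∑ q : Fin 3 × Fin 3 × Fin 3 × Fin 3 × Fin 3, Gz z (e5 q) * (1/3)^5 :=
          (Equiv.sum_comp e5 (fun a => Gz z a * (1/3)^5)).symm
    _ = ∑ q : Fin 3 × Fin 3 × Fin 3 × Fin 3 × Fin 3,
          T5 z q.1 q.2.1 q.2.2.1 q.2.2.2.1 q.2.2.2.2 * (1/3:ℝ)^5 := by
          refine Finset.sum_congr rfl fun q _ => ?_
          rw [show Gz z (e5 q) = Gz z ![q.1, q.2.1, q.2.2.1, q.2.2.2.1, q.2.2.2.2] from rfl,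
            Gz_eval]
    _ = 1/1024 + (5/288) * z^4 - (5/36) * z^6 + (5/162) * z^8 := sum_T5 z
end
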